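/- arXiv:1308.0154 — 6 statements merged into one kernel-verified Lean document; each statement's English description precedes it below -/
import Mathlib

section
/- Let k be a field, A = k[X,Y], and let F ∈ A be a rectangular element with respect to the pair (X,Y); that is, there exist integers m,n ≥ 1 such that (m,n) lies in the support of F and the support of F is contained in the rectangle [0,m] × [0,n]. If p is a prime ideal of A such that the composite k[F] → A → A/p is an isomorphism, then p = (X−a) for some a ∈ k with deg F(a,Y) = 1, or p = (Y−b) for some b ∈ k with deg F(X,b) = 1. -/
open MvPolynomial


lemma aux_ne_X {k : Type} [Field k] (F : MvPolynomial (Fin 2) k) (m n : ℕ)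
    (hm : 1 ≤ m) (hn : 1 ≤ n)
    (hmem : MvPolynomial.coeff (Finsupp.single 0 m + Finsupp.single 1 n) F ≠ 0)
    (hsupp : ∀ d ∈ F.support, d 0 ≤ m ∧ d 1 ≤ n)
    (u v : Polynomial k) (hu : u.natDegree ≠ 0) (hv : v.natDegree ≠ 0) :
    MvPolynomial.aeval ![u, v] F ≠ Polynomial.X := by
  set du := u.natDegree with hdu
  set dv := v.natDegree with hdv
  have hu0 : u ≠ 0 := fun h => hu (by simp [h, hdu])
  have hv0 : v ≠ 0 := fun h => hv (by simp [h, hdv])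
  have hdu1 : 1 ≤ du := Nat.one_le_iff_ne_zero.mpr hu
  have hdv1 : 1 ≤ dv := Nat.one_le_iff_ne_zero.mpr hv
  set d₀ : Fin 2 →₀ ℕ := Finsupp.single 0 m + Finsupp.single 1 n with hd₀
  have hd₀0 : d₀ 0 = m := by simp [hd₀, Finsupp.single_apply]
  have hd₀1 : d₀ 1 = n := by simp [hd₀, Finsupp.single_apply]
  set N := m * du + n * dv with hN
  have hN2 : 2 ≤ N := by
    calc 2 = 1 * 1 + 1 * 1 := by norm_num
    _ ≤ m * du + n * dv := Nat.add_le_add (Nat.mul_le_mul hm hdu1) (Nat.mul_le_mul hn hdv1)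
  have hsum : MvPolynomial.aeval ![u, v] F =
      ∑ d ∈ F.support, Polynomial.C (MvPolynomial.coeff d F) * (u ^ d 0 * v ^ d 1) := by
    rw [MvPolynomial.aeval_def, eval₂_eq']
    refine Finset.sum_congr rfl fun d _ => ?_
    rw [Fin.prod_univ_two]
    simp [Polynomial.algebraMap_eq]
  have hone : ∀ d ∈ F.support, d ≠ d₀ →
      (Polynomial.C (MvPolynomial.coeff d F) * (u ^ d 0 * v ^ d 1)).coeff N = 0 := by
    intro d hd hne
    have h1 := hsupp d hd
    have hlt : d 0 * du + d 1 * dv < N := by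
      have hcase : d 0 < m ∨ d 1 < n := by
        by_contra hc
        push_neg at hc
        apply hne
        have e0 : d 0 = m := le_antisymm h1.1 hc.1
        have e1 : d 1 = n := le_antisymm h1.2 hc.2
        ext i
        fin_cases i
        · simpa [hd₀0] using e0
        · simpa [hd₀1] using e1
      rcases hcase with h | h
      · calc d 0 * du + d 1 * dv < m * du + d 1 * dv :=
              Nat.add_lt_add_right ((Nat.mul_lt_mul_right hdu1).mpr h) _
        _ ≤ N := Nat.add_le_add_left (Nat.mul_le_mul_right _ h1.2) _
      · calc d 0 * du + d 1 * dv < d 0 * du + n * dv :=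
              Nat.add_lt_add_left ((Nat.mul_lt_mul_right hdv1).mpr h) _
        _ ≤ N := Nat.add_le_add_right (Nat.mul_le_mul_right _ h1.1) _
    apply Polynomial.coeff_eq_zero_of_natDegree_lt
    calc (Polynomial.C (MvPolynomial.coeff d F) * (u ^ d 0 * v ^ d 1)).natDegree
        ≤ (Polynomial.C (MvPolynomial.coeff d F)).natDegree + (u ^ d 0 * v ^ d 1).natDegree :=
          Polynomial.natDegree_mul_le
      _ ≤ 0 + (d 0 * du + d 1 * dv) := by
          refine Nat.add_le_add (le_of_eq (Polynomial.natDegree_C _)) ?_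
          calc (u ^ d 0 * v ^ d 1).natDegree
              ≤ (u ^ d 0).natDegree + (v ^ d 1).natDegree := Polynomial.natDegree_mul_le
            _ ≤ d 0 * du + d 1 * dv :=
                Nat.add_le_add Polynomial.natDegree_pow_le Polynomial.natDegree_pow_le
      _ < N := by simpa using hlt
  have hcoeff : (MvPolynomial.aeval ![u, v] F).coeff N ≠ 0 := by
    rw [hsum, Polynomial.finset_sum_coeff,
      Finset.sum_eq_single_of_mem d₀ (MvPolynomial.mem_support_iff.mpr hmem) hone]
    have hnd : (u ^ m * v ^ n).natDegree = N := by
      rw [Polynomial.natDegree_mul (pow_ne_zero _ hu0) (pow_ne_zero _ hv0),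
        Polynomial.natDegree_pow, Polynomial.natDegree_pow]
    rw [hd₀0, hd₀1, Polynomial.coeff_C_mul, ← hnd, Polynomial.coeff_natDegree]
    have hlc : (u ^ m * v ^ n).leadingCoeff ≠ 0 := by
      rw [Polynomial.leadingCoeff_mul, Polynomial.leadingCoeff_pow,
        Polynomial.leadingCoeff_pow]
      exact mul_ne_zero (pow_ne_zero _ (Polynomial.leadingCoeff_ne_zero.mpr hu0))
        (pow_ne_zero _ (Polynomial.leadingCoeff_ne_zero.mpr hv0))
    exact mul_ne_zero hmem hlc
  intro heq
  rw [heq, Polynomial.coeff_X] at hcoeff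
  have h1N : ¬ (1 = N) := by omega
  simp [h1N] at hcoeff

lemma aux_sub_mem {k : Type} [CommRing k] (I : Ideal (MvPolynomial (Fin 2) k))
    (t : Fin 2 → MvPolynomial (Fin 2) k) (ht : ∀ i, X i - t i ∈ I)
    (f : MvPolynomial (Fin 2) k) : f - MvPolynomial.aeval t f ∈ I := by
  induction f using MvPolynomial.induction_on with
  | C c => simp
  | add f g hf hg =>
      have : f + g - MvPolynomial.aeval t (f + g) =
        (f - MvPolynomial.aeval t f) + (g - MvPolynomial.aeval t g) := by
        rw [map_add]; ring
      rw [this]; exact I.add_mem hf hg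
  | mul_X f i hf =>
      have : f * X i - MvPolynomial.aeval t (f * X i) =
          (f - MvPolynomial.aeval t f) * X i +
            MvPolynomial.aeval t f * (X i - t i) := by
        rw [map_mul, aeval_X]; ring
      rw [this]
      exact I.add_mem (I.mul_mem_right _ hf) (I.mul_mem_left _ (ht i))

lemma aux_case0 {k : Type} [Field k] (F : MvPolynomial (Fin 2) k)
    (p : Ideal (MvPolynomial (Fin 2) k))
    (hinj : Function.Injective
      (fun q : Polynomial k => Ideal.Quotient.mk p (Polynomial.aeval F q)))
    (a : k) (hXa : X 0 - C a ∈ p)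
    (hdeg : (MvPolynomial.aeval ![Polynomial.C a, Polynomial.X] F).natDegree = 1) :
    p = Ideal.span {X 0 - C a} := by
  set g : Polynomial k := MvPolynomial.aeval ![Polynomial.C a, Polynomial.X] F with hgdef
  have hg0 : g ≠ 0 := fun h => by simp [h] at hdeg
  set c := g.coeff 1 with hcdef
  set d := g.coeff 0 with hddef
  have hc : c ≠ 0 := by
    have : g.coeff g.natDegree ≠ 0 := by
      rw [Polynomial.coeff_natDegree]
      exact Polynomial.leadingCoeff_ne_zero.mpr hg0
    rwa [hdeg] at this
  have hgeq : g = Polynomial.C c * Polynomial.X + Polynomial.C d :=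
    Polynomial.eq_X_add_C_of_natDegree_le_one (le_of_eq hdeg)
  -- surjectivity of composition with g
  have hs : (Polynomial.C c⁻¹ * (Polynomial.X - Polynomial.C d)).comp g = Polynomial.X := by
    rw [Polynomial.mul_comp, Polynomial.sub_comp, Polynomial.C_comp, Polynomial.C_comp,
      Polynomial.X_comp]
    rw [hgeq, add_sub_cancel_right, ← mul_assoc, ← Polynomial.C_mul, inv_mul_cancel₀ hc,
      Polynomial.C_1, one_mul]
  have hsurj : ∀ r : Polynomial k, ∃ q : Polynomial k, Polynomial.aeval g q = r := by
    intro r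
    refine ⟨r.comp (Polynomial.C c⁻¹ * (Polynomial.X - Polynomial.C d)), ?_⟩
    rw [← Polynomial.comp_eq_aeval, Polynomial.comp_assoc, hs, Polynomial.comp_X]
  -- substitution hom τ
  set τ : MvPolynomial (Fin 2) k →ₐ[k] MvPolynomial (Fin 2) k :=
    MvPolynomial.aeval ![C a, X 1] with hτdef
  have hspan_le : Ideal.span {X 0 - C a} ≤ p :=
    (Ideal.span_le).mpr (Set.singleton_subset_iff.mpr hXa)
  have hsub : ∀ f : MvPolynomial (Fin 2) k, f - τ f ∈ Ideal.span {X 0 - C a} := by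
    intro f
    refine aux_sub_mem _ ![C a, X 1] ?_ f
    intro i
    fin_cases i
    · exact Ideal.subset_span rfl
    · simp
  set θ : Polynomial k →ₐ[k] MvPolynomial (Fin 2) k :=
    Polynomial.aeval (X 1 : MvPolynomial (Fin 2) k) with hθdef
  have hτθ : ∀ f : MvPolynomial (Fin 2) k,
      τ f = θ (MvPolynomial.aeval ![Polynomial.C a, Polynomial.X] f) := by
    intro f
    have : θ.comp (MvPolynomial.aeval ![Polynomial.C a, Polynomial.X]) =
        MvPolynomial.aeval (fun i => θ (![Polynomial.C a, Polynomial.X] i)) :=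
      MvPolynomial.comp_aeval ![Polynomial.C a, Polynomial.X] θ
    have h2 : (fun i => θ (![Polynomial.C a, Polynomial.X] i)) = ![C a, X 1] := by
      funext i
      fin_cases i
      · simp [hθdef, Polynomial.aeval_C, algebraMap_eq]
      · simp [hθdef]
    have e1 : τ f = MvPolynomial.aeval (fun i => θ (![Polynomial.C a, Polynomial.X] i)) f := by
      rw [h2, hτdef]
    have e2 : MvPolynomial.aeval (fun i => θ (![Polynomial.C a, Polynomial.X] i)) f =
        θ (MvPolynomial.aeval ![Polynomial.C a, Polynomial.X] f) := by
      rw [← this]; rfl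
    rw [e1, e2]
  refine le_antisymm ?_ hspan_le
  intro f hf
  have h1 : τ f ∈ p := by
    have h2 : f - τ f ∈ p := hspan_le (hsub f)
    have := p.sub_mem hf h2
    simpa using this
  obtain ⟨q, hq⟩ := hsurj (MvPolynomial.aeval ![Polynomial.C a, Polynomial.X] f)
  have h3 : τ f = Polynomial.aeval (τ F) q := by
    rw [hτθ f, ← hq, ← Polynomial.aeval_algHom_apply θ g q, hgdef, ← hτθ F]
  have hmkF : Ideal.Quotient.mk p (τ F) = Ideal.Quotient.mk p F := by
    rw [Ideal.Quotient.mk_eq_mk_iff_sub_mem]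
    have := p.neg_mem (hspan_le (hsub F))
    rwa [neg_sub] at this
  have h4 : Ideal.Quotient.mk p (Polynomial.aeval F q) = 0 := by
    have e1 : Ideal.Quotient.mk p (Polynomial.aeval F q) =
        Polynomial.aeval (Ideal.Quotient.mk p F) q :=
      (Polynomial.aeval_algHom_apply (Ideal.Quotient.mkₐ k p) F q).symm
    have e2 : Ideal.Quotient.mk p (Polynomial.aeval (τ F) q) =
        Polynomial.aeval (Ideal.Quotient.mk p (τ F)) q :=
      (Polynomial.aeval_algHom_apply (Ideal.Quotient.mkₐ k p) (τ F) q).symm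
    rw [e1, ← hmkF, ← e2, ← h3]
    exact Ideal.Quotient.eq_zero_iff_mem.mpr h1
  have hq0 : q = 0 := by
    apply hinj
    simp only [map_zero, h4]
  have hτf0 : τ f = 0 := by rw [h3, hq0, map_zero]
  have := hsub f
  rwa [hτf0, sub_zero] at this


lemma aux_case1 {k : Type} [Field k] (F : MvPolynomial (Fin 2) k)
    (p : Ideal (MvPolynomial (Fin 2) k))
    (hinj : Function.Injective
      (fun q : Polynomial k => Ideal.Quotient.mk p (Polynomial.aeval F q)))
    (b : k) (hXa : X 1 - C b ∈ p)
    (hdeg : (MvPolynomial.aeval ![Polynomial.X, Polynomial.C b] F).natDegree = 1) :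
    p = Ideal.span {X 1 - C b} := by
  set g : Polynomial k := MvPolynomial.aeval ![Polynomial.X, Polynomial.C b] F with hgdef
  have hg0 : g ≠ 0 := fun h => by simp [h] at hdeg
  set c := g.coeff 1 with hcdef
  set d := g.coeff 0 with hddef
  have hc : c ≠ 0 := by
    have : g.coeff g.natDegree ≠ 0 := by
      rw [Polynomial.coeff_natDegree]
      exact Polynomial.leadingCoeff_ne_zero.mpr hg0
    rwa [hdeg] at this
  have hgeq : g = Polynomial.C c * Polynomial.X + Polynomial.C d :=
    Polynomial.eq_X_add_C_of_natDegree_le_one (le_of_eq hdeg)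
  have hs : (Polynomial.C c⁻¹ * (Polynomial.X - Polynomial.C d)).comp g = Polynomial.X := by
    rw [Polynomial.mul_comp, Polynomial.sub_comp, Polynomial.C_comp, Polynomial.C_comp,
      Polynomial.X_comp]
    rw [hgeq, add_sub_cancel_right, ← mul_assoc, ← Polynomial.C_mul, inv_mul_cancel₀ hc,
      Polynomial.C_1, one_mul]
  have hsurj : ∀ r : Polynomial k, ∃ q : Polynomial k, Polynomial.aeval g q = r := by
    intro r
    refine ⟨r.comp (Polynomial.C c⁻¹ * (Polynomial.X - Polynomial.C d)), ?_⟩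
    rw [← Polynomial.comp_eq_aeval, Polynomial.comp_assoc, hs, Polynomial.comp_X]
  set τ : MvPolynomial (Fin 2) k →ₐ[k] MvPolynomial (Fin 2) k :=
    MvPolynomial.aeval ![X 0, C b] with hτdef
  have hspan_le : Ideal.span {X 1 - C b} ≤ p :=
    (Ideal.span_le).mpr (Set.singleton_subset_iff.mpr hXa)
  have hsub : ∀ f : MvPolynomial (Fin 2) k, f - τ f ∈ Ideal.span {X 1 - C b} := by
    intro f
    refine aux_sub_mem _ ![X 0, C b] ?_ f
    intro i
    fin_cases i
    · simp
    · exact Ideal.subset_span rfl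
  set θ : Polynomial k →ₐ[k] MvPolynomial (Fin 2) k :=
    Polynomial.aeval (X 0 : MvPolynomial (Fin 2) k) with hθdef
  have hτθ : ∀ f : MvPolynomial (Fin 2) k,
      τ f = θ (MvPolynomial.aeval ![Polynomial.X, Polynomial.C b] f) := by
    intro f
    have : θ.comp (MvPolynomial.aeval ![Polynomial.X, Polynomial.C b]) =
        MvPolynomial.aeval (fun i => θ (![Polynomial.X, Polynomial.C b] i)) :=
      MvPolynomial.comp_aeval ![Polynomial.X, Polynomial.C b] θ
    have h2 : (fun i => θ (![Polynomial.X, Polynomial.C b] i)) = ![X 0, C b] := by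
      funext i
      fin_cases i
      · simp [hθdef]
      · simp [hθdef, Polynomial.aeval_C, algebraMap_eq]
    have e1 : τ f = MvPolynomial.aeval (fun i => θ (![Polynomial.X, Polynomial.C b] i)) f := by
      rw [h2, hτdef]
    have e2 : MvPolynomial.aeval (fun i => θ (![Polynomial.X, Polynomial.C b] i)) f =
        θ (MvPolynomial.aeval ![Polynomial.X, Polynomial.C b] f) := by
      rw [← this]; rfl
    rw [e1, e2]
  refine le_antisymm ?_ hspan_le
  intro f hf
  have h1 : τ f ∈ p := by
    have h2 : f - τ f ∈ p := hspan_le (hsub f)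
    have := p.sub_mem hf h2
    simpa using this
  obtain ⟨q, hq⟩ := hsurj (MvPolynomial.aeval ![Polynomial.X, Polynomial.C b] f)
  have h3 : τ f = Polynomial.aeval (τ F) q := by
    rw [hτθ f, ← hq, ← Polynomial.aeval_algHom_apply θ g q, hgdef, ← hτθ F]
  have hmkF : Ideal.Quotient.mk p (τ F) = Ideal.Quotient.mk p F := by
    rw [Ideal.Quotient.mk_eq_mk_iff_sub_mem]
    have := p.neg_mem (hspan_le (hsub F))
    rwa [neg_sub] at this
  have h4 : Ideal.Quotient.mk p (Polynomial.aeval F q) = 0 := by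
    have e1 : Ideal.Quotient.mk p (Polynomial.aeval F q) =
        Polynomial.aeval (Ideal.Quotient.mk p F) q :=
      (Polynomial.aeval_algHom_apply (Ideal.Quotient.mkₐ k p) F q).symm
    have e2 : Ideal.Quotient.mk p (Polynomial.aeval (τ F) q) =
        Polynomial.aeval (Ideal.Quotient.mk p (τ F)) q :=
      (Polynomial.aeval_algHom_apply (Ideal.Quotient.mkₐ k p) (τ F) q).symm
    rw [e1, ← hmkF, ← e2, ← h3]
    exact Ideal.Quotient.eq_zero_iff_mem.mpr h1
  have hq0 : q = 0 := by
    apply hinj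
    simp only [map_zero, h4]
  have hτf0 : τ f = 0 := by rw [h3, hq0, map_zero]
  have := hsub f
  rwa [hτf0, sub_zero] at this

/-- If `F ∈ k[X,Y]` is rectangular w.r.t. `(X,Y)` with bidegree `(m,n)`,
and `p` is a prime of `A` such that `k[F] → A/p` is an isomorphism, then `p = (X−a)` with
`deg F(a,Y) = 1` or `p = (Y−b)` with `deg F(X,b) = 1`. -/
theorem stmt2 (k : Type) [Field k] (F : MvPolynomial (Fin 2) k) (m n : ℕ)
    (hm : 1 ≤ m) (hn : 1 ≤ n)
    (hmem : MvPolynomial.coeff (Finsupp.single 0 m + Finsupp.single 1 n) F ≠ 0)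
    (hsupp : ∀ d ∈ F.support, d 0 ≤ m ∧ d 1 ≤ n)
    (p : Ideal (MvPolynomial (Fin 2) k)) (hp : p.IsPrime)
    (hiso : Function.Bijective
      (fun q : Polynomial k => Ideal.Quotient.mk p (Polynomial.aeval F q))) :
    (∃ a : k, p = Ideal.span {X 0 - C a} ∧
       (MvPolynomial.aeval ![Polynomial.C a, Polynomial.X] F).degree = 1) ∨
    (∃ b : k, p = Ideal.span {X 1 - C b} ∧
       (MvPolynomial.aeval ![Polynomial.X, Polynomial.C b] F).degree = 1) := by
  classical
  set Φ : Polynomial k →ₐ[k] MvPolynomial (Fin 2) k ⧸ p :=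
    (Ideal.Quotient.mkₐ k p).comp (Polynomial.aeval F) with hΦdef
  have hΦ : ∀ q : Polynomial k, Φ q = Ideal.Quotient.mk p (Polynomial.aeval F q) :=
    fun q => rfl
  have hinj : Function.Injective Φ := by
    intro x y h
    exact hiso.injective (by rw [← hΦ, ← hΦ, h])
  have hsurj : Function.Surjective Φ := fun y => (hiso.surjective y).imp (fun q hq => hq)
  -- preimages of X 0 and X 1
  obtain ⟨u, hu⟩ := hsurj (Ideal.Quotient.mk p (X 0))
  obtain ⟨v, hv⟩ := hsurj (Ideal.Quotient.mk p (X 1))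
  -- the key identity
  have keyeq : MvPolynomial.aeval ![u, v] F = Polynomial.X := by
    apply hinj
    have c1 : Φ.comp (MvPolynomial.aeval ![u, v]) =
        MvPolynomial.aeval (fun i => Φ (![u, v] i)) := MvPolynomial.comp_aeval ![u, v] Φ
    have c2 : (fun i => Φ (![u, v] i)) =
        (fun i => Ideal.Quotient.mkₐ k p (MvPolynomial.X i)) := by
      funext i
      fin_cases i
      · simpa using hu
      · simpa using hv
    have c3 : (Ideal.Quotient.mkₐ k p).comp
          (MvPolynomial.aeval (MvPolynomial.X : Fin 2 → MvPolynomial (Fin 2) k)) =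
        MvPolynomial.aeval (fun i => Ideal.Quotient.mkₐ k p (MvPolynomial.X i)) :=
      MvPolynomial.comp_aeval MvPolynomial.X (Ideal.Quotient.mkₐ k p)
    have : Φ (MvPolynomial.aeval ![u, v] F) =
        MvPolynomial.aeval (fun i => Φ (![u, v] i)) F := by
      rw [← c1]; rfl
    rw [this, c2, ← c3]
    have : Φ Polynomial.X = Ideal.Quotient.mk p F := by
      rw [hΦ, Polynomial.aeval_X]
    rw [this]
    simp [MvPolynomial.aeval_X_left_apply]
  by_cases hu0 : u.natDegree = 0
  · -- u is a constant, left case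
    left
    set a := u.coeff 0 with hadef
    have hua : u = Polynomial.C a := Polynomial.eq_C_of_natDegree_eq_zero hu0
    have hXa : X 0 - C a ∈ p := by
      have h1 : Φ (Polynomial.C a) = Ideal.Quotient.mk p (C a) := by
        rw [hΦ, Polynomial.aeval_C, MvPolynomial.algebraMap_eq]
      have h2 : Ideal.Quotient.mk p (X 0) = Ideal.Quotient.mk p (C a) := by
        rw [← hu, hua, h1]
      rw [← Ideal.Quotient.mk_eq_mk_iff_sub_mem]
      exact h2
    set g : Polynomial k := MvPolynomial.aeval ![Polynomial.C a, Polynomial.X] F with hgdef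
    have hcomp : g.comp v = Polynomial.X := by
      have c1 : (Polynomial.aeval v).comp
            (MvPolynomial.aeval ![(Polynomial.C a : Polynomial k), Polynomial.X]) =
          MvPolynomial.aeval
            (fun i => Polynomial.aeval v (![(Polynomial.C a : Polynomial k), Polynomial.X] i)) :=
        MvPolynomial.comp_aeval _ (Polynomial.aeval v)
      have c2 : (fun i => Polynomial.aeval v
            (![(Polynomial.C a : Polynomial k), Polynomial.X] i)) = ![u, v] := by
        funext i
        fin_cases i
        · simp [hua]
        · simp
      have e1 : Polynomial.aeval v g =
          MvPolynomial.aeval (fun i => Polynomial.aeval v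
            (![(Polynomial.C a : Polynomial k), Polynomial.X] i)) F := by
        rw [← c1]; rfl
      rw [Polynomial.comp_eq_aeval, e1, c2, keyeq]
    have hmul : g.natDegree * v.natDegree = 1 := by
      rw [← Polynomial.natDegree_comp, hcomp, Polynomial.natDegree_X]
    have hdeg : g.natDegree = 1 := Nat.dvd_one.mp ⟨v.natDegree, hmul.symm⟩
    have hg0 : g ≠ 0 := fun h => by simp [h] at hdeg
    refine ⟨a, aux_case0 F p hiso.injective a hXa hdeg, ?_⟩
    rw [← hgdef]
    exact_mod_cast (Polynomial.degree_eq_iff_natDegree_eq hg0).mpr hdeg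
  · have hv0 : v.natDegree = 0 := by
      by_contra hv0
      exact aux_ne_X F m n hm hn hmem hsupp u v hu0 hv0 keyeq
    right
    set b := v.coeff 0 with hbdef
    have hvb : v = Polynomial.C b := Polynomial.eq_C_of_natDegree_eq_zero hv0
    have hXb : X 1 - C b ∈ p := by
      have h1 : Φ (Polynomial.C b) = Ideal.Quotient.mk p (C b) := by
        rw [hΦ, Polynomial.aeval_C, MvPolynomial.algebraMap_eq]
      have h2 : Ideal.Quotient.mk p (X 1) = Ideal.Quotient.mk p (C b) := by
        rw [← hv, hvb, h1]
      rw [← Ideal.Quotient.mk_eq_mk_iff_sub_mem]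
      exact h2
    set g : Polynomial k := MvPolynomial.aeval ![Polynomial.X, Polynomial.C b] F with hgdef
    have hcomp : g.comp u = Polynomial.X := by
      have c1 : (Polynomial.aeval u).comp
            (MvPolynomial.aeval ![Polynomial.X, (Polynomial.C b : Polynomial k)]) =
          MvPolynomial.aeval
            (fun i => Polynomial.aeval u (![Polynomial.X, (Polynomial.C b : Polynomial k)] i)) :=
        MvPolynomial.comp_aeval _ (Polynomial.aeval u)
      have c2 : (fun i => Polynomial.aeval u
            (![Polynomial.X, (Polynomial.C b : Polynomial k)] i)) = ![u, v] := by
        funext i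
        fin_cases i
        · simp
        · simp [hvb]
      have e1 : Polynomial.aeval u g =
          MvPolynomial.aeval (fun i => Polynomial.aeval u
            (![Polynomial.X, (Polynomial.C b : Polynomial k)] i)) F := by
        rw [← c1]; rfl
      rw [Polynomial.comp_eq_aeval, e1, c2, keyeq]
    have hmul : g.natDegree * u.natDegree = 1 := by
      rw [← Polynomial.natDegree_comp, hcomp, Polynomial.natDegree_X]
    have hdeg : g.natDegree = 1 := Nat.dvd_one.mp ⟨u.natDegree, hmul.symm⟩
    have hg0 : g ≠ 0 := fun h => by simp [h] at hdeg
    refine ⟨b, aux_case1 F p hiso.injective b hXb hdeg, ?_⟩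
    rw [← hgdef]
    exact_mod_cast (Polynomial.degree_eq_iff_natDegree_eq hg0).mpr hdeg
end

section
/- Let k be a field, A = k[X,Y], and F ∈ A a rectangular element with (m,n) in its support and support contained in [0,m] × [0,n], where m,n ≥ 2. Write F = Σ a_{ij} X^i Y^j. If p is a prime ideal of A such that k[F] → A/p is an isomorphism, then either p = (X−a) where a is a root of the polynomial Σ_{i=0}^m a_{i,n} X^i, or p = (Y−b) where b is a root of Σ_{j=0}^n a_{m,j} Y^j. -/
open MvPolynomial


lemma fin2_decomp (d : Fin 2 →₀ ℕ) :
    d = Finsupp.single 0 (d 0) + Finsupp.single 1 (d 1) := by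
  ext i
  fin_cases i <;> simp

lemma single_add_eq_iff {i j i' j' : ℕ} :
    (Finsupp.single (0 : Fin 2) i + Finsupp.single 1 j
      = Finsupp.single 0 i' + Finsupp.single 1 j') ↔ (i = i' ∧ j = j') := by
  constructor
  · intro h
    constructor
    · have := DFunLike.congr_fun h 0
      simpa using this
    · have := DFunLike.congr_fun h 1
      simpa using this
  · rintro ⟨rfl, rfl⟩; rfl

lemma rect_repr {k : Type} [Field k] (F : MvPolynomial (Fin 2) k) (m n : ℕ)
    (hsupp : ∀ d ∈ F.support, d 0 ≤ m ∧ d 1 ≤ n) :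
    F = ∑ i ∈ Finset.range (m+1), ∑ j ∈ Finset.range (n+1),
      monomial (Finsupp.single 0 i + Finsupp.single 1 j)
        (coeff (Finsupp.single 0 i + Finsupp.single 1 j) F) := by
  ext d
  rw [show d = Finsupp.single 0 (d 0) + Finsupp.single 1 (d 1) from fin2_decomp d]
  rw [coeff_sum]
  simp only [coeff_sum, coeff_monomial]
  by_cases hd : coeff (Finsupp.single 0 (d 0) + Finsupp.single 1 (d 1)) F = 0
  · rw [hd]
    symm
    apply Finset.sum_eq_zero
    intro i _
    apply Finset.sum_eq_zero
    intro j _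
    split
    · next h => rw [h]; exact hd
    · rfl
  · have hmem : (Finsupp.single (0:Fin 2) (d 0) + Finsupp.single 1 (d 1)) ∈ F.support :=
      MvPolynomial.mem_support_iff.mpr hd
    have h0 := (hsupp _ hmem).1
    have h1 := (hsupp _ hmem).2
    simp only [Finsupp.coe_add, Pi.add_apply] at h0 h1
    rw [Finsupp.single_apply, Finsupp.single_apply] at h0 h1
    norm_num at h0 h1
    rw [Finset.sum_eq_single (d 0), Finset.sum_eq_single (d 1)]
    · simp
    · intro j _ hj
      rw [if_neg]
      intro h
      exact hj (single_add_eq_iff.mp h).2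
    · intro h; exact absurd (Finset.mem_range.mpr (Nat.lt_succ_of_le h1)) h
    · intro i hi hii
      apply Finset.sum_eq_zero
      intro j _
      rw [if_neg]
      intro h
      exact hii (single_add_eq_iff.mp h).1
    · intro h; exact absurd (Finset.mem_range.mpr (Nat.lt_succ_of_le h0)) h


lemma aeval_rect {k : Type} [Field k] (F : MvPolynomial (Fin 2) k) (m n : ℕ)
    {S : Type} [CommRing S] [Algebra k S] (u : Fin 2 → S)
    (hF : F = ∑ i ∈ Finset.range (m+1), ∑ j ∈ Finset.range (n+1),
      monomial (Finsupp.single 0 i + Finsupp.single 1 j)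
        (coeff (Finsupp.single 0 i + Finsupp.single 1 j) F)) :
    aeval u F = ∑ i ∈ Finset.range (m+1), ∑ j ∈ Finset.range (n+1),
      algebraMap k S (coeff (Finsupp.single 0 i + Finsupp.single 1 j) F)
        * u 0 ^ i * u 1 ^ j := by
  conv_lhs => rw [hF]
  rw [map_sum]
  apply Finset.sum_congr rfl
  intro i _
  rw [map_sum]
  apply Finset.sum_congr rfl
  intro j _
  rw [aeval_monomial, Finsupp.prod_fintype _ _ (fun _ => pow_zero _), Fin.prod_univ_two]
  simp [Finsupp.single_apply, mul_assoc]


lemma not_both_nonconstant {k : Type} [Field k] (F : MvPolynomial (Fin 2) k) (m n : ℕ)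
    (hm : 2 ≤ m) (hn : 2 ≤ n)
    (hmem : MvPolynomial.coeff (Finsupp.single 0 m + Finsupp.single 1 n) F ≠ 0)
    (hF : F = ∑ i ∈ Finset.range (m+1), ∑ j ∈ Finset.range (n+1),
      monomial (Finsupp.single 0 i + Finsupp.single 1 j)
        (coeff (Finsupp.single 0 i + Finsupp.single 1 j) F))
    (g h : Polynomial k) (hg : 1 ≤ g.natDegree) (hh : 1 ≤ h.natDegree)
    (heq : aeval (fun i : Fin 2 => if i = 0 then g else h) F = Polynomial.X) : False := by
  have hg0 : g ≠ 0 := fun hz => by rw [hz] at hg; simp at hg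
  have hh0 : h ≠ 0 := fun hz => by rw [hz] at hh; simp at hh
  set N := m * g.natDegree + n * h.natDegree with hN
  have hdeg : ∀ i j : ℕ, (Polynomial.C (coeff (Finsupp.single 0 i + Finsupp.single 1 j) F)
      * g ^ i * h ^ j).natDegree ≤ i * g.natDegree + j * h.natDegree := by
    intro i j
    calc (Polynomial.C _ * g ^ i * h ^ j).natDegree
        ≤ (Polynomial.C _ * g ^ i).natDegree + (h ^ j).natDegree := Polynomial.natDegree_mul_le
      _ ≤ ((Polynomial.C _).natDegree + (g ^ i).natDegree) + (h ^ j).natDegree := by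
          exact Nat.add_le_add_right Polynomial.natDegree_mul_le _
      _ ≤ i * g.natDegree + j * h.natDegree := by
          rw [Polynomial.natDegree_C, Polynomial.natDegree_pow, Polynomial.natDegree_pow]
          omega
  have key : (aeval (fun i : Fin 2 => if i = 0 then g else h) F).coeff N
      = coeff (Finsupp.single 0 m + Finsupp.single 1 n) F
        * g.leadingCoeff ^ m * h.leadingCoeff ^ n := by
    rw [aeval_rect F m n _ hF]
    have h00 : (if (0:Fin 2) = 0 then g else h) = g := by norm_num
    have h10 : (if (1:Fin 2) = 0 then g else h) = h := by norm_num
    simp only [Polynomial.algebraMap_eq, h00, h10, if_true]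
    rw [Polynomial.finset_sum_coeff]
    rw [Finset.sum_eq_single m]
    · rw [Polynomial.finset_sum_coeff, Finset.sum_eq_single n]
      · have hdm : (g ^ m * h ^ n).natDegree = N := by
          rw [Polynomial.natDegree_mul (pow_ne_zero _ hg0) (pow_ne_zero _ hh0),
            Polynomial.natDegree_pow, Polynomial.natDegree_pow]
        rw [mul_assoc, Polynomial.coeff_C_mul, ← hdm, Polynomial.coeff_natDegree,
          Polynomial.leadingCoeff_mul, Polynomial.leadingCoeff_pow, Polynomial.leadingCoeff_pow]
        ring
      · intro j hj hjn
        apply Polynomial.coeff_eq_zero_of_natDegree_lt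
        calc (Polynomial.C _ * g ^ m * h ^ j).natDegree ≤ m * g.natDegree + j * h.natDegree := hdeg m j
          _ < N := by
              have hj' : j < n := by
                rcases Finset.mem_range.mp hj with h'
                omega
              have : j * h.natDegree < n * h.natDegree := Nat.mul_lt_mul_of_lt_of_le hj' (le_refl h.natDegree) (by omega)
              omega
      · intro hnn; exact absurd (Finset.mem_range.mpr (by omega)) hnn
    · intro i hi him
      rw [Polynomial.finset_sum_coeff]
      apply Finset.sum_eq_zero
      intro j hj
      apply Polynomial.coeff_eq_zero_of_natDegree_lt
      calc (Polynomial.C _ * g ^ i * h ^ j).natDegree ≤ i * g.natDegree + j * h.natDegree := hdeg i j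
        _ < N := by
            have hi' : i < m := by
              rcases Finset.mem_range.mp hi with h'
              omega
            have h1 : i * g.natDegree < m * g.natDegree := Nat.mul_lt_mul_of_lt_of_le hi' (le_refl g.natDegree) (by omega)
            have h2 : j * h.natDegree ≤ n * h.natDegree := Nat.mul_le_mul_right h.natDegree (by
              have := Finset.mem_range.mp hj; omega)
            omega
    · intro hmm; exact absurd (Finset.mem_range.mpr (by omega)) hmm
  rw [heq] at key
  have hN1 : N ≠ 1 := by
    have : m * g.natDegree ≥ m := Nat.le_mul_of_pos_right m (by omega)
    have : n * h.natDegree ≥ n := Nat.le_mul_of_pos_right n (by omega)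
    omega
  rw [Polynomial.coeff_X, if_neg (fun hc => hN1 hc.symm)] at key
  exact (mul_ne_zero (mul_ne_zero hmem (pow_ne_zero _ (Polynomial.leadingCoeff_ne_zero.mpr hg0)))
    (pow_ne_zero _ (Polynomial.leadingCoeff_ne_zero.mpr hh0))) key.symm

lemma const_case0 {k : Type} [Field k] (F : MvPolynomial (Fin 2) k) (m n : ℕ)
    (hn : 2 ≤ n)
    (hF : F = ∑ i ∈ Finset.range (m+1), ∑ j ∈ Finset.range (n+1),
      monomial (Finsupp.single 0 i + Finsupp.single 1 j)
        (coeff (Finsupp.single 0 i + Finsupp.single 1 j) F))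
    (a : k) (h : Polynomial k)
    (heq : aeval (fun i : Fin 2 => if i = 0 then Polynomial.C a else h) F = Polynomial.X) :
    1 ≤ h.natDegree ∧
      ∑ i ∈ Finset.range (m + 1),
        coeff (Finsupp.single 0 i + Finsupp.single 1 n) F * a ^ i = 0 := by
  set v : Fin 2 → Polynomial k := fun i => if i = 0 then Polynomial.C a else Polynomial.X with hv
  set P := aeval v F with hP
  have hcomp : P.comp h = Polynomial.X := by
    rw [Polynomial.comp_eq_aeval, hP]
    have key := congrFun (congrArg DFunLike.coe
      (MvPolynomial.comp_aeval v (Polynomial.aeval h))) F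
    simp only [AlgHom.coe_comp, Function.comp_apply] at key
    have hfun : (fun i => Polynomial.aeval h (v i))
        = (fun i : Fin 2 => if i = 0 then Polynomial.C a else h) := by
      funext i
      by_cases hi : i = 0 <;> simp [hv, hi, Polynomial.algebraMap_eq]
    rw [key, hfun, heq]
  have hmul : P.natDegree * h.natDegree = 1 := by
    rw [← Polynomial.natDegree_comp, hcomp, Polynomial.natDegree_X]
  have hP1 : P.natDegree = 1 := Nat.eq_one_of_mul_eq_one_right hmul
  have hh1 : h.natDegree = 1 := Nat.eq_one_of_mul_eq_one_left hmul
  refine ⟨by omega, ?_⟩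
  have hPn : P.coeff n = 0 := Polynomial.coeff_eq_zero_of_natDegree_lt (by omega)
  rw [hP, aeval_rect F m n v hF] at hPn
  rw [← hPn, Polynomial.finset_sum_coeff]
  apply Finset.sum_congr rfl
  intro i _
  rw [Polynomial.finset_sum_coeff, Finset.sum_eq_single n]
  · have h0 : v 0 = Polynomial.C a := by simp [hv]
    have h1 : v 1 = Polynomial.X := by simp [hv]
    rw [h0, h1, Polynomial.algebraMap_eq, ← map_pow, ← map_mul,
      Polynomial.coeff_C_mul, Polynomial.coeff_X_pow, if_pos rfl, mul_one]
  · intro j _ hjn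
    have h0 : v 0 = Polynomial.C a := by simp [hv]
    have h1 : v 1 = Polynomial.X := by simp [hv]
    rw [h0, h1, Polynomial.algebraMap_eq, ← map_pow, ← map_mul,
      Polynomial.coeff_C_mul, Polynomial.coeff_X_pow, if_neg (fun hc => hjn hc.symm), mul_zero]
  · intro hnn; exact absurd (Finset.mem_range.mpr (by omega)) hnn


lemma reduce_mod0 {k : Type} [Field k] (a : k) (f : MvPolynomial (Fin 2) k) :
    ∃ r : Polynomial k, f - Polynomial.aeval (X 1) r ∈
      Ideal.span ({X 0 - C a} : Set (MvPolynomial (Fin 2) k)) := by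
  induction f using MvPolynomial.induction_on with
  | C c =>
      exact ⟨Polynomial.C c, by simp [MvPolynomial.algebraMap_eq, Ideal.zero_mem]⟩
  | add f g hf hg =>
      obtain ⟨r1, h1⟩ := hf
      obtain ⟨r2, h2⟩ := hg
      refine ⟨r1 + r2, ?_⟩
      rw [map_add]
      have : f + g - (Polynomial.aeval (X 1) r1 + Polynomial.aeval (X 1) r2)
          = (f - Polynomial.aeval (X 1) r1) + (g - Polynomial.aeval (X 1) r2) := by ring
      rw [this]
      exact Ideal.add_mem _ h1 h2
  | mul_X f i hf =>
      obtain ⟨r, hr⟩ := hf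
      have hgen : (X 0 - C a : MvPolynomial (Fin 2) k) ∈
          Ideal.span ({X 0 - C a} : Set (MvPolynomial (Fin 2) k)) :=
        Ideal.subset_span rfl
      fin_cases i
      · refine ⟨Polynomial.C a * r, ?_⟩
        have : f * X 0 - Polynomial.aeval (X 1) (Polynomial.C a * r)
            = X 0 * (f - Polynomial.aeval (X 1) r)
              + Polynomial.aeval (X 1) r * (X 0 - C a) := by
          rw [map_mul]
          simp only [MvPolynomial.algebraMap_eq, Polynomial.aeval_C]
          ring
        have goal' : f * X 0 - Polynomial.aeval (X 1) (Polynomial.C a * r) ∈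
            Ideal.span ({X 0 - C a} : Set (MvPolynomial (Fin 2) k)) := by
          rw [this]
          exact Ideal.add_mem _ (Ideal.mul_mem_left _ _ hr) (Ideal.mul_mem_left _ _ hgen)
        exact goal'
      · refine ⟨r * Polynomial.X, ?_⟩
        have : f * X 1 - Polynomial.aeval (X 1) (r * Polynomial.X)
            = X 1 * (f - Polynomial.aeval (X 1) r) := by
          rw [map_mul, Polynomial.aeval_X]
          ring
        have goal' : f * X 1 - Polynomial.aeval (X 1) (r * Polynomial.X) ∈
            Ideal.span ({X 0 - C a} : Set (MvPolynomial (Fin 2) k)) := by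
          rw [this]
          exact Ideal.mul_mem_left _ _ hr
        exact goal'

lemma span_eq0 {k : Type} [Field k] (F : MvPolynomial (Fin 2) k)
    (p : Ideal (MvPolynomial (Fin 2) k))
    (hinj : Function.Injective
      (fun q : Polynomial k => Ideal.Quotient.mk p (Polynomial.aeval F q)))
    (a : k) (ha : X 0 - C a ∈ p)
    (h : Polynomial k) (hh : 1 ≤ h.natDegree)
    (hhp : X 1 - Polynomial.aeval F h ∈ p) :
    p = Ideal.span ({X 0 - C a} : Set (MvPolynomial (Fin 2) k)) := by
  apply le_antisymm
  · intro f hf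
    obtain ⟨r, hr⟩ := reduce_mod0 a f
    have hspan_le : Ideal.span ({X 0 - C a} : Set (MvPolynomial (Fin 2) k)) ≤ p := by
      rw [Ideal.span_le, Set.singleton_subset_iff]; exact ha
    have hrp : Polynomial.aeval (X 1 : MvPolynomial (Fin 2) k) r ∈ p := by
      have := p.sub_mem hf (hspan_le hr)
      simpa using this
    -- show r.comp h = 0
    have hmk1 : Ideal.Quotient.mk p (X 1) = Ideal.Quotient.mk p (Polynomial.aeval F h) :=
      Ideal.Quotient.eq.mpr hhp
    have key : Ideal.Quotient.mk p (Polynomial.aeval F (r.comp h)) = 0 := by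
      have e1 : Polynomial.aeval F (r.comp h)
          = Polynomial.aeval (Polynomial.aeval F h) r := Polynomial.aeval_comp _
      have e2 : Ideal.Quotient.mk p (Polynomial.aeval (Polynomial.aeval F h) r)
          = Polynomial.aeval (Ideal.Quotient.mk p (Polynomial.aeval F h)) r :=
        (Polynomial.aeval_algHom_apply (Ideal.Quotient.mkₐ k p) _ r).symm
      have e3 : Polynomial.aeval (Ideal.Quotient.mk p (X 1)) r
          = Ideal.Quotient.mk p (Polynomial.aeval (X 1 : MvPolynomial (Fin 2) k) r) :=
        Polynomial.aeval_algHom_apply (Ideal.Quotient.mkₐ k p) _ r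
      rw [e1, e2, ← hmk1, e3, Ideal.Quotient.eq_zero_iff_mem]
      exact hrp
    have hr0 : r.comp h = 0 := by
      have := hinj (a₁ := r.comp h) (a₂ := 0)
      simp only at this
      apply this
      rw [key, map_zero, map_zero]
    have hrz : r = 0 := by
      rcases Polynomial.comp_eq_zero_iff.mp hr0 with h1 | ⟨_, h2⟩
      · exact h1
      · exfalso
        have : h.natDegree = 0 := by rw [h2]; exact Polynomial.natDegree_C _
        omega
    rw [hrz] at hr
    simpa using hr
  · rw [Ideal.span_le, Set.singleton_subset_iff]; exact ha

lemma const_case1 {k : Type} [Field k] (F : MvPolynomial (Fin 2) k) (m n : ℕ)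
    (hm : 2 ≤ m)
    (hF : F = ∑ i ∈ Finset.range (m+1), ∑ j ∈ Finset.range (n+1),
      monomial (Finsupp.single 0 i + Finsupp.single 1 j)
        (coeff (Finsupp.single 0 i + Finsupp.single 1 j) F))
    (b : k) (g : Polynomial k)
    (heq : aeval (fun i : Fin 2 => if i = 0 then g else Polynomial.C b) F = Polynomial.X) :
    1 ≤ g.natDegree ∧
      ∑ j ∈ Finset.range (n + 1),
        coeff (Finsupp.single 0 m + Finsupp.single 1 j) F * b ^ j = 0 := by
  set v : Fin 2 → Polynomial k := fun i => if i = 0 then Polynomial.X else Polynomial.C b with hv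
  set P := aeval v F with hP
  have hcomp : P.comp g = Polynomial.X := by
    rw [Polynomial.comp_eq_aeval, hP]
    have key := congrFun (congrArg DFunLike.coe
      (MvPolynomial.comp_aeval v (Polynomial.aeval g))) F
    simp only [AlgHom.coe_comp, Function.comp_apply] at key
    have hfun : (fun i => Polynomial.aeval g (v i))
        = (fun i : Fin 2 => if i = 0 then g else Polynomial.C b) := by
      funext i
      by_cases hi : i = 0 <;> simp [hv, hi, Polynomial.algebraMap_eq]
    rw [key, hfun, heq]
  have hmul : P.natDegree * g.natDegree = 1 := by
    rw [← Polynomial.natDegree_comp, hcomp, Polynomial.natDegree_X]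
  have hP1 : P.natDegree = 1 := Nat.eq_one_of_mul_eq_one_right hmul
  have hg1 : g.natDegree = 1 := Nat.eq_one_of_mul_eq_one_left hmul
  refine ⟨by omega, ?_⟩
  have hPm : P.coeff m = 0 := Polynomial.coeff_eq_zero_of_natDegree_lt (by omega)
  rw [hP, aeval_rect F m n v hF] at hPm
  have h0 : v 0 = Polynomial.X := by simp [hv]
  have h1 : v 1 = Polynomial.C b := by simp [hv]
  have hsum : (∑ i ∈ Finset.range (m+1), ∑ j ∈ Finset.range (n+1),
      algebraMap k (Polynomial k) (coeff (Finsupp.single 0 i + Finsupp.single 1 j) F)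
        * v 0 ^ i * v 1 ^ j).coeff m
      = ∑ j ∈ Finset.range (n + 1),
        coeff (Finsupp.single 0 m + Finsupp.single 1 j) F * b ^ j := by
    rw [Polynomial.finset_sum_coeff, Finset.sum_eq_single m]
    · rw [Polynomial.finset_sum_coeff]
      apply Finset.sum_congr rfl
      intro j _
      rw [h0, h1, Polynomial.algebraMap_eq, ← map_pow, mul_right_comm, ← map_mul,
        Polynomial.coeff_C_mul, Polynomial.coeff_X_pow, if_pos rfl, mul_one]
    · intro i _ him
      rw [Polynomial.finset_sum_coeff]
      apply Finset.sum_eq_zero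
      intro j _
      rw [h0, h1, Polynomial.algebraMap_eq, ← map_pow, mul_right_comm, ← map_mul,
        Polynomial.coeff_C_mul, Polynomial.coeff_X_pow, if_neg (fun hc => him hc.symm), mul_zero]
    · intro hmm; exact absurd (Finset.mem_range.mpr (by omega)) hmm
  rw [← hsum, hPm]

lemma reduce_mod1 {k : Type} [Field k] (b : k) (f : MvPolynomial (Fin 2) k) :
    ∃ r : Polynomial k, f - Polynomial.aeval (X 0) r ∈
      Ideal.span ({X 1 - C b} : Set (MvPolynomial (Fin 2) k)) := by
  induction f using MvPolynomial.induction_on with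
  | C c =>
      exact ⟨Polynomial.C c, by simp [MvPolynomial.algebraMap_eq, Ideal.zero_mem]⟩
  | add f g hf hg =>
      obtain ⟨r1, h1⟩ := hf
      obtain ⟨r2, h2⟩ := hg
      refine ⟨r1 + r2, ?_⟩
      rw [map_add]
      have : f + g - (Polynomial.aeval (X 0) r1 + Polynomial.aeval (X 0) r2)
          = (f - Polynomial.aeval (X 0) r1) + (g - Polynomial.aeval (X 0) r2) := by ring
      rw [this]
      exact Ideal.add_mem _ h1 h2
  | mul_X f i hf =>
      obtain ⟨r, hr⟩ := hf
      have hgen : (X 1 - C b : MvPolynomial (Fin 2) k) ∈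
          Ideal.span ({X 1 - C b} : Set (MvPolynomial (Fin 2) k)) :=
        Ideal.subset_span rfl
      fin_cases i
      · refine ⟨r * Polynomial.X, ?_⟩
        have : f * X 0 - Polynomial.aeval (X 0) (r * Polynomial.X)
            = X 0 * (f - Polynomial.aeval (X 0) r) := by
          rw [map_mul, Polynomial.aeval_X]
          ring
        have goal' : f * X 0 - Polynomial.aeval (X 0) (r * Polynomial.X) ∈
            Ideal.span ({X 1 - C b} : Set (MvPolynomial (Fin 2) k)) := by
          rw [this]
          exact Ideal.mul_mem_left _ _ hr
        exact goal'
      · refine ⟨Polynomial.C b * r, ?_⟩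
        have : f * X 1 - Polynomial.aeval (X 0) (Polynomial.C b * r)
            = X 1 * (f - Polynomial.aeval (X 0) r)
              + Polynomial.aeval (X 0) r * (X 1 - C b) := by
          rw [map_mul]
          simp only [MvPolynomial.algebraMap_eq, Polynomial.aeval_C]
          ring
        have goal' : f * X 1 - Polynomial.aeval (X 0) (Polynomial.C b * r) ∈
            Ideal.span ({X 1 - C b} : Set (MvPolynomial (Fin 2) k)) := by
          rw [this]
          exact Ideal.add_mem _ (Ideal.mul_mem_left _ _ hr) (Ideal.mul_mem_left _ _ hgen)
        exact goal'

lemma span_eq1 {k : Type} [Field k] (F : MvPolynomial (Fin 2) k)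
    (p : Ideal (MvPolynomial (Fin 2) k))
    (hinj : Function.Injective
      (fun q : Polynomial k => Ideal.Quotient.mk p (Polynomial.aeval F q)))
    (b : k) (hb : X 1 - C b ∈ p)
    (g : Polynomial k) (hg : 1 ≤ g.natDegree)
    (hgp : X 0 - Polynomial.aeval F g ∈ p) :
    p = Ideal.span ({X 1 - C b} : Set (MvPolynomial (Fin 2) k)) := by
  apply le_antisymm
  · intro f hf
    obtain ⟨r, hr⟩ := reduce_mod1 b f
    have hspan_le : Ideal.span ({X 1 - C b} : Set (MvPolynomial (Fin 2) k)) ≤ p := by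
      rw [Ideal.span_le, Set.singleton_subset_iff]; exact hb
    have hrp : Polynomial.aeval (X 0 : MvPolynomial (Fin 2) k) r ∈ p := by
      have := p.sub_mem hf (hspan_le hr)
      simpa using this
    have hmk1 : Ideal.Quotient.mk p (X 0) = Ideal.Quotient.mk p (Polynomial.aeval F g) :=
      Ideal.Quotient.eq.mpr hgp
    have key : Ideal.Quotient.mk p (Polynomial.aeval F (r.comp g)) = 0 := by
      have e1 : Polynomial.aeval F (r.comp g)
          = Polynomial.aeval (Polynomial.aeval F g) r := Polynomial.aeval_comp _
      have e2 : Ideal.Quotient.mk p (Polynomial.aeval (Polynomial.aeval F g) r)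
          = Polynomial.aeval (Ideal.Quotient.mk p (Polynomial.aeval F g)) r :=
        (Polynomial.aeval_algHom_apply (Ideal.Quotient.mkₐ k p) _ r).symm
      have e3 : Polynomial.aeval (Ideal.Quotient.mk p (X 0)) r
          = Ideal.Quotient.mk p (Polynomial.aeval (X 0 : MvPolynomial (Fin 2) k) r) :=
        Polynomial.aeval_algHom_apply (Ideal.Quotient.mkₐ k p) _ r
      rw [e1, e2, ← hmk1, e3, Ideal.Quotient.eq_zero_iff_mem]
      exact hrp
    have hr0 : r.comp g = 0 := by
      have := hinj (a₁ := r.comp g) (a₂ := 0)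
      simp only at this
      apply this
      rw [key, map_zero, map_zero]
    have hrz : r = 0 := by
      rcases Polynomial.comp_eq_zero_iff.mp hr0 with h1 | ⟨_, h2⟩
      · exact h1
      · exfalso
        have : g.natDegree = 0 := by rw [h2]; exact Polynomial.natDegree_C _
        omega
    rw [hrz] at hr
    simpa using hr
  · rw [Ideal.span_le, Set.singleton_subset_iff]; exact hb

/-- If `F = Σ a_{ij} X^i Y^j` is rectangular with bidegree `(m,n)`, `m,n ≥ 2`,
and `p` is a prime with `k[F] → A/p` an isomorphism, then `p = (X−a)` where `a` is a root of
`Σ_{i=0}^m a_{i,n} X^i`, or `p = (Y−b)` where `b` is a root of `Σ_{j=0}^n a_{m,j} Y^j`. -/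
theorem stmt3 (k : Type) [Field k] (F : MvPolynomial (Fin 2) k) (m n : ℕ)
    (hm : 2 ≤ m) (hn : 2 ≤ n)
    (hmem : MvPolynomial.coeff (Finsupp.single 0 m + Finsupp.single 1 n) F ≠ 0)
    (hsupp : ∀ d ∈ F.support, d 0 ≤ m ∧ d 1 ≤ n)
    (p : Ideal (MvPolynomial (Fin 2) k)) (hp : p.IsPrime)
    (hiso : Function.Bijective
      (fun q : Polynomial k => Ideal.Quotient.mk p (Polynomial.aeval F q))) :
    (∃ a : k, p = Ideal.span {X 0 - C a} ∧
       ∑ i ∈ Finset.range (m + 1),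
         MvPolynomial.coeff (Finsupp.single 0 i + Finsupp.single 1 n) F * a ^ i = 0) ∨
    (∃ b : k, p = Ideal.span {X 1 - C b} ∧
       ∑ j ∈ Finset.range (n + 1),
         MvPolynomial.coeff (Finsupp.single 0 m + Finsupp.single 1 j) F * b ^ j = 0) := by
  obtain ⟨hinj, hsurj⟩ := hiso
  obtain ⟨g, hg⟩ := hsurj (Ideal.Quotient.mk p (X 0))
  obtain ⟨h, hh⟩ := hsurj (Ideal.Quotient.mk p (X 1))
  simp only [] at hg hh
  have hF := rect_repr F m n hsupp
  have hGX : aeval (fun i : Fin 2 => if i = 0 then g else h) F = Polynomial.X := by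
    apply hinj
    show Ideal.Quotient.mk p (Polynomial.aeval F
        (aeval (fun i : Fin 2 => if i = 0 then g else h) F))
      = Ideal.Quotient.mk p (Polynomial.aeval F Polynomial.X)
    rw [Polynomial.aeval_X]
    have e1 : Polynomial.aeval F (aeval (fun i : Fin 2 => if i = 0 then g else h) F)
        = aeval (fun i : Fin 2 => Polynomial.aeval F (if i = 0 then g else h)) F :=
      congrFun (congrArg DFunLike.coe
        (MvPolynomial.comp_aeval (fun i : Fin 2 => if i = 0 then g else h)
          (Polynomial.aeval F))) F
    rw [e1]
    have e2 : Ideal.Quotient.mk p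
          (aeval (fun i : Fin 2 => Polynomial.aeval F (if i = 0 then g else h)) F)
        = aeval (fun i : Fin 2 =>
            Ideal.Quotient.mk p (Polynomial.aeval F (if i = 0 then g else h))) F :=
      congrFun (congrArg DFunLike.coe
        (MvPolynomial.comp_aeval
          (fun i : Fin 2 => Polynomial.aeval F (if i = 0 then g else h))
          (Ideal.Quotient.mkₐ k p))) F
    rw [e2]
    have e3 : (fun i : Fin 2 =>
          Ideal.Quotient.mk p (Polynomial.aeval F (if i = 0 then g else h)))
        = fun i : Fin 2 => Ideal.Quotient.mk p (X i) := by
      funext i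
      fin_cases i
      · simpa using hg
      · simpa using hh
    rw [e3]
    have e4 : Ideal.Quotient.mk p F
        = aeval (fun i : Fin 2 => Ideal.Quotient.mk p (X i)) F := by
      have := congrFun (congrArg DFunLike.coe
        (MvPolynomial.comp_aeval (X : Fin 2 → MvPolynomial (Fin 2) k)
          (Ideal.Quotient.mkₐ k p))) F
      simpa using this
    rw [← e4]
  have hgmem : X 0 - Polynomial.aeval F g ∈ p := by
    rw [← Ideal.Quotient.eq]
    exact hg.symm
  have hhmem : X 1 - Polynomial.aeval F h ∈ p := by
    rw [← Ideal.Quotient.eq]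
    exact hh.symm
  by_cases hgd : 1 ≤ g.natDegree
  · by_cases hhd : 1 ≤ h.natDegree
    · exact absurd hGX (fun hc =>
        not_both_nonconstant F m n hm hn hmem hF g h hgd hhd hc)
    · -- h is constant
      have hb : h = Polynomial.C (h.coeff 0) :=
        Polynomial.eq_C_of_natDegree_eq_zero (by omega)
      set b := h.coeff 0 with hbdef
      have heq' : aeval (fun i : Fin 2 => if i = 0 then g else Polynomial.C b) F
          = Polynomial.X := by
        rw [← hb]; exact hGX
      obtain ⟨hgd', hsum⟩ := const_case1 F m n hm hF b g heq'
      right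
      refine ⟨b, ?_, hsum⟩
      have hbmem : X 1 - C b ∈ p := by
        have : Polynomial.aeval F h = C b := by
          rw [hb, Polynomial.aeval_C, MvPolynomial.algebraMap_eq]
        rw [← this]
        exact hhmem
      exact span_eq1 F p hinj b hbmem g hgd hgmem
  · -- g is constant
    have ha : g = Polynomial.C (g.coeff 0) :=
      Polynomial.eq_C_of_natDegree_eq_zero (by omega)
    set a := g.coeff 0 with hadef
    have heq' : aeval (fun i : Fin 2 => if i = 0 then Polynomial.C a else h) F
        = Polynomial.X := by
      rw [← ha]; exact hGX
    obtain ⟨hhd', hsum⟩ := const_case0 F m n hn hF a h heq'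
    left
    refine ⟨a, ?_, hsum⟩
    have hamem : X 0 - C a ∈ p := by
      have : Polynomial.aeval F g = C a := by
        rw [ha, Polynomial.aeval_C, MvPolynomial.algebraMap_eq]
      rw [← this]
      exact hgmem
    exact span_eq0 F p hinj a hamem h hhd' hhmem
end

section
/- Let k be a field, A = k[X,Y], and F ∈ A a rectangular element: there exist m,n ≥ 1 with (m,n) in the support of F with respect to (X,Y) and the support contained in [0,m]×[0,n]. If (U,V) is another pair with A = k[U,V] and F is rectangular with respect to (U,V) (with corresponding pair (m',n')), then either (U,V) = (aX+b, cY+d) or (U,V) = (cY+d, aX+b) for some a,b,c,d ∈ k with ac ≠ 0. Consequently {m',n'} = {m,n}. -/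
open MvPolynomial

/-!
If `G` has corner `(m, n)` and `P, Q` are nonconstant, the corner monomial `P ^ m * Q ^ n` has
strictly larger degree than every other monomial of `G(P, Q)`, so
`deg G(P, Q) = m deg P + n deg Q`. For `F = G(U, V)` and the inverse substitution `G = F(U', V')`
this gives `m + n = m' deg U + n' deg V ≥ m' + n' = m deg U' + n deg V' ≥ m + n`, hence `U` and `V`
are affine and `m + n = m' + n'`. Precomposing with `X ↦ X ^ 2`, resp. `Y ↦ Y ^ 2`, and comparing
degrees again shows that each variable occurs in exactly one of `U`, `V`.
-/

theorem Nat.add_mul_lt_add_mul_of_le_of_ne {a b m n p q : ℕ} (hp : 0 < p) (hq : 0 < q)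
    (ha : a ≤ m) (hb : b ≤ n) (hne : (a, b) ≠ (m, n)) : a * p + b * q < m * p + n * q := by
  rcases ha.lt_or_eq with ha | rfl
  · exact Nat.add_lt_add_of_lt_of_le (Nat.mul_lt_mul_of_pos_right ha hp) (Nat.mul_le_mul_right q hb)
  · have hb : b < n := hb.lt_of_ne fun h => hne (h ▸ rfl)
    exact Nat.add_lt_add_left (Nat.mul_lt_mul_of_pos_right hb hq) _

namespace MvPolynomial

section CommSemiring

variable {R : Type*} [CommSemiring R]

theorem totalDegree_pos_of_injective_aeval [Nontrivial R] {σ τ : Type*}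
    {f : σ → MvPolynomial τ R} (hf : Function.Injective (aeval (R := R) f)) (i : σ) :
    0 < (f i).totalDegree := by
  rw [pos_iff_ne_zero, Ne, totalDegree_eq_zero_iff_eq_C]
  intro h
  have hX : X i = C (coeff 0 (f i)) := hf (by simpa using h)
  simpa using congrArg totalDegree hX

theorem exists_leftInverse_aeval_of_bijective {σ τ : Type*} {f : σ → MvPolynomial τ R}
    (hf : Function.Bijective (aeval (R := R) f)) :
    ∃ g : τ → MvPolynomial σ R, Function.Injective (aeval (R := R) g) ∧
      ∀ p, aeval g (aeval f p) = p := by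
  let e : MvPolynomial σ R ≃ₐ[R] MvPolynomial τ R := AlgEquiv.ofBijective (aeval f) hf
  have hg : aeval (e.symm.toAlgHom ∘ X) = e.symm.toAlgHom := (aeval_unique _).symm
  refine ⟨e.symm.toAlgHom ∘ X, ?_, fun p => ?_⟩
  · rw [hg]
    exact e.symm.injective
  · rw [hg]
    exact e.symm_apply_apply p

theorem eq_affine_of_totalDegree_le_one {P : MvPolynomial (Fin 2) R} (h : P.totalDegree ≤ 1) :
    P = C (coeff (Finsupp.single 0 1) P) * X 0 + C (coeff (Finsupp.single 1 1) P) * X 1 +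
      C (coeff 0 P) := by
  classical
  ext d
  simp only [coeff_add, coeff_C_mul, coeff_X, coeff_C]
  by_cases h0 : d = Finsupp.single 0 1
  · subst h0; simp [Finsupp.single_eq_single_iff, eq_comm (a := (0 : Fin 2 →₀ ℕ))]
  by_cases h1 : d = Finsupp.single 1 1
  · subst h1; simp [Finsupp.single_eq_single_iff, eq_comm (a := (0 : Fin 2 →₀ ℕ))]
  by_cases h2 : d = 0
  · subst h2; simp
  have hd : coeff d P = 0 := by
    by_contra hd
    have hdeg : d 0 + d 1 ≤ 1 := by
      have := (le_totalDegree (mem_support_iff.mpr hd)).trans h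
      rwa [Finsupp.sum_fintype _ _ fun _ => rfl, Fin.sum_univ_two] at this
    have : d 0 = 1 ∧ d 1 = 0 ∨ d 0 = 0 ∧ d 1 = 1 ∨ d 0 = 0 ∧ d 1 = 0 := by omega
    rcases this with ⟨e0, e1⟩ | ⟨e0, e1⟩ | ⟨e0, e1⟩
    · exact h0 (by ext i; fin_cases i <;> simp [e0, e1])
    · exact h1 (by ext i; fin_cases i <;> simp [e0, e1])
    · exact h2 (by ext i; fin_cases i <;> simp [e0, e1])
  simp [hd, Ne.symm h0, Ne.symm h1, Ne.symm h2]

variable [DecidableEq R] {a b : R}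

theorem totalDegree_C_mul_X_sq_add_C_mul_X_add_C {σ : Type*} (hab : a ≠ 0 ∨ b ≠ 0) (i j : σ)
    (e : R) : (C a * X i ^ 2 + C b * X j + C e).totalDegree = if a = 0 then 1 else 2 := by
  have hlin : (C b * X j + C e).totalDegree ≤ 1 := by
    refine (totalDegree_add _ _).trans (max_le ?_ (by simp))
    simpa [C_mul_X_eq_monomial] using totalDegree_monomial_le (Finsupp.single j 1) b
  split_ifs with ha
  · have hb : b ≠ 0 := hab.resolve_left (not_not.mpr ha)
    have hX : (C b * X j).totalDegree = 1 := by
      simp [C_mul_X_eq_monomial, totalDegree_monomial _ hb]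
    rw [ha, C_0, zero_mul, zero_add, totalDegree_add_eq_left_of_totalDegree_lt (by simp [hX]), hX]
  · have hX : (C a * X i ^ 2).totalDegree = 2 := by
      simp [C_mul_X_pow_eq_monomial, totalDegree_monomial _ ha]
    rw [add_assoc, totalDegree_add_eq_left_of_totalDegree_lt (by omega), hX]

theorem totalDegree_aeval_X_zero_sq (hab : a ≠ 0 ∨ b ≠ 0) (e : R) :
    (aeval ![(X 0 : MvPolynomial (Fin 2) R) ^ 2, X 1] (C a * X 0 + C b * X 1 + C e)).totalDegree =
      if a = 0 then 1 else 2 := by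
  rw [← totalDegree_C_mul_X_sq_add_C_mul_X_add_C hab (0 : Fin 2) 1 e]
  simp

theorem totalDegree_aeval_X_one_sq (hab : a ≠ 0 ∨ b ≠ 0) (e : R) :
    (aeval ![(X 0 : MvPolynomial (Fin 2) R), X 1 ^ 2] (C a * X 0 + C b * X 1 + C e)).totalDegree =
      if b = 0 then 1 else 2 := by
  rw [← totalDegree_C_mul_X_sq_add_C_mul_X_add_C hab.symm (1 : Fin 2) 0 e,
    add_comm (C b * _) (C a * X 0)]
  simp

end CommSemiring

section IsDomain

variable {R : Type*} [CommRing R] [IsDomain R] {σ : Type*}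

theorem totalDegree_pow_of_isDomain {p : MvPolynomial σ R} (hp : p ≠ 0) (r : ℕ) :
    (p ^ r).totalDegree = r * p.totalDegree := by
  induction r with
  | zero => simp
  | succ r ih =>
    rw [pow_succ, totalDegree_mul_of_isDomain (pow_ne_zero _ hp) hp, ih, add_one_mul]

theorem totalDegree_aeval_monomial_fin_two {f : Fin 2 → MvPolynomial σ R} (hf : ∀ i, f i ≠ 0)
    (d : Fin 2 →₀ ℕ) {c : R} (hc : c ≠ 0) :
    (aeval f (monomial d c)).totalDegree = d 0 * (f 0).totalDegree + d 1 * (f 1).totalDegree := by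
  have hprod : d.prod (fun i k => f i ^ k) = f 0 ^ d 0 * f 1 ^ d 1 := by
    rw [Finsupp.prod_fintype _ _ fun _ => pow_zero _, Fin.prod_univ_two]
  have h0 := pow_ne_zero (d 0) (hf 0)
  have h1 := pow_ne_zero (d 1) (hf 1)
  rw [aeval_monomial, hprod, algebraMap_eq, totalDegree_mul_of_isDomain (C_ne_zero.mpr hc)
    (mul_ne_zero h0 h1), totalDegree_mul_of_isDomain h0 h1, totalDegree_C,
    totalDegree_pow_of_isDomain (hf 0), totalDegree_pow_of_isDomain (hf 1), zero_add]

end IsDomain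

/-- The paper's requirement `1 ≤ m`, `1 ≤ n` is not part of this predicate. -/
def IsRectangular {R : Type*} [CommSemiring R] (F : MvPolynomial (Fin 2) R) (m n : ℕ) : Prop :=
  coeff (Finsupp.single 0 m + Finsupp.single 1 n) F ≠ 0 ∧ ∀ d ∈ F.support, d 0 ≤ m ∧ d 1 ≤ n

namespace IsRectangular

variable {R : Type*} [CommRing R] [IsDomain R] {F G : MvPolynomial (Fin 2) R} {m n m' n' : ℕ}

theorem totalDegree_aeval {σ : Type*} (hG : G.IsRectangular m n) (hm : 0 < m)
    {f : Fin 2 → MvPolynomial σ R} (hf : ∀ i, 0 < (f i).totalDegree) :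
    (aeval f G).totalDegree = m * (f 0).totalDegree + n * (f 1).totalDegree := by
  classical
  set d₀ : Fin 2 →₀ ℕ := Finsupp.single 0 m + Finsupp.single 1 n
  have hf₀ : ∀ i, f i ≠ 0 := fun i h => by simpa [h] using hf i
  have hsplit : aeval f G = aeval f (monomial d₀ (coeff d₀ G)) +
      ∑ d ∈ G.support.erase d₀, aeval f (monomial d (coeff d G)) := by
    conv_lhs => rw [G.as_sum, map_sum]
    exact (Finset.add_sum_erase _ (fun d => aeval f (monomial d (coeff d G)))
      (mem_support_iff.mpr hG.1)).symm
  have htop : (aeval f (monomial d₀ (coeff d₀ G))).totalDegree =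
      m * (f 0).totalDegree + n * (f 1).totalDegree := by
    rw [totalDegree_aeval_monomial_fin_two hf₀ _ hG.1]
    simp [d₀]
  have hrest : (∑ d ∈ G.support.erase d₀, aeval f (monomial d (coeff d G))).totalDegree <
      m * (f 0).totalDegree + n * (f 1).totalDegree := by
    refine (totalDegree_finsetSum _ _).trans_lt <|
      (Finset.sup_lt_iff (by have := hf 0; positivity)).mpr fun d hd => ?_
    obtain ⟨hne, hd⟩ := Finset.mem_erase.mp hd
    obtain ⟨h0, h1⟩ := hG.2 d hd
    rw [totalDegree_aeval_monomial_fin_two hf₀ _ (mem_support_iff.mp hd)]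
    refine Nat.add_mul_lt_add_mul_of_le_of_ne (hf 0) (hf 1) h0 h1 fun h => hne ?_
    simp only [Prod.mk.injEq] at h
    ext i
    fin_cases i <;> simp [d₀, h]
  rw [hsplit, totalDegree_add_eq_left_of_totalDegree_lt (htop ▸ hrest), htop]

theorem totalDegree_aeval_of_aeval_eq {σ : Type*} (hF : F.IsRectangular m n)
    (hG : G.IsRectangular m' n') (hm : 0 < m) (hm' : 0 < m') {f : Fin 2 → MvPolynomial (Fin 2) R}
    (hfG : aeval f G = F) {s : Fin 2 → MvPolynomial σ R} (hs : ∀ i, 0 < (s i).totalDegree)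
    (hsf : ∀ i, 0 < (aeval s (f i)).totalDegree) :
    m * (s 0).totalDegree + n * (s 1).totalDegree =
      m' * (aeval s (f 0)).totalDegree + n' * (aeval s (f 1)).totalDegree := by
  rw [← hF.totalDegree_aeval hm hs, ← hG.totalDegree_aeval hm' hsf, ← hfG, comp_aeval_apply]

theorem totalDegree_eq_one_of_aeval_eq (hF : F.IsRectangular m n) (hG : G.IsRectangular m' n')
    (hm : 0 < m) (hm' : 0 < m') (hn' : 0 < n') {f g : Fin 2 → MvPolynomial (Fin 2) R}
    (hf : ∀ i, 0 < (f i).totalDegree) (hg : ∀ i, 0 < (g i).totalDegree)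
    (hfG : aeval f G = F) (hgF : aeval g F = G) :
    (f 0).totalDegree = 1 ∧ (f 1).totalDegree = 1 ∧ m + n = m' + n' := by
  have e₁ := hF.totalDegree_aeval_of_aeval_eq hG hm hm' hfG (s := X) (by simp) (by simpa using hf)
  have e₂ := hG.totalDegree_aeval_of_aeval_eq hF hm' hm hgF (s := X) (by simp) (by simpa using hg)
  simp only [totalDegree_X, aeval_X_left_apply, mul_one] at e₁ e₂
  have := Nat.le_mul_of_pos_right m' (hf 0)
  have := Nat.le_mul_of_pos_right n' (hf 1)
  have := Nat.le_mul_of_pos_right m (hg 0)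
  have := Nat.le_mul_of_pos_right n (hg 1)
  refine ⟨(Nat.mul_eq_left hm'.ne').mp ?_, (Nat.mul_eq_left hn'.ne').mp ?_, ?_⟩ <;> omega

theorem diagonal_or_antidiagonal_of_aeval_affine_eq (hF : F.IsRectangular m n)
    (hG : G.IsRectangular m' n') (hm : 0 < m) (hn : 0 < n) (hm' : 0 < m') {a b c d e f : R}
    (hab : a ≠ 0 ∨ b ≠ 0) (hcd : c ≠ 0 ∨ d ≠ 0)
    (hUV : aeval ![C a * X 0 + C b * X 1 + C e, C c * X 0 + C d * X 1 + C f] G = F)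
    (hmn : m + n = m' + n') :
    (b = 0 ∧ c = 0 ∧ m' = m ∧ n' = n) ∨ (a = 0 ∧ d = 0 ∧ m' = n ∧ n' = m) := by
  classical
  have key₀ := hF.totalDegree_aeval_of_aeval_eq hG hm hm' hUV
    (s := ![(X 0 : MvPolynomial (Fin 2) R) ^ 2, X 1]) (by simp [Fin.forall_fin_two])
    (by simp only [Fin.forall_fin_two, Matrix.cons_val_zero, Matrix.cons_val_one,
          totalDegree_aeval_X_zero_sq hab, totalDegree_aeval_X_zero_sq hcd]
        constructor <;> split_ifs <;> simp)
  have key₁ := hF.totalDegree_aeval_of_aeval_eq hG hm hm' hUV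
    (s := ![(X 0 : MvPolynomial (Fin 2) R), X 1 ^ 2]) (by simp [Fin.forall_fin_two])
    (by simp only [Fin.forall_fin_two, Matrix.cons_val_zero, Matrix.cons_val_one,
          totalDegree_aeval_X_one_sq hab, totalDegree_aeval_X_one_sq hcd]
        constructor <;> split_ifs <;> simp)
  simp only [Matrix.cons_val_zero, Matrix.cons_val_one, totalDegree_X_pow, totalDegree_X,
    totalDegree_aeval_X_zero_sq hab, totalDegree_aeval_X_zero_sq hcd,
    totalDegree_aeval_X_one_sq hab, totalDegree_aeval_X_one_sq hcd] at key₀ key₁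
  split_ifs at key₀ key₁ <;> simp_all <;> omega

theorem exists_affine_of_aeval_eq (hF : F.IsRectangular m n) (hG : G.IsRectangular m' n')
    (hm : 0 < m) (hn : 0 < n) (hm' : 0 < m') {U V : MvPolynomial (Fin 2) R}
    (hU : U.totalDegree = 1) (hV : V.totalDegree = 1) (hUV : aeval ![U, V] G = F)
    (hmn : m + n = m' + n') :
    (∃ a b c d : R, a * c ≠ 0 ∧
       ((U = C a * X 0 + C b ∧ V = C c * X 1 + C d) ∨
        (U = C c * X 1 + C d ∧ V = C a * X 0 + C b)))
    ∧ ((m' = m ∧ n' = n) ∨ (m' = n ∧ n' = m)) := by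
  classical
  set a := coeff (Finsupp.single 0 1) U
  set b := coeff (Finsupp.single 1 1) U
  set e := coeff 0 U
  set c := coeff (Finsupp.single 0 1) V
  set d := coeff (Finsupp.single 1 1) V
  set f := coeff 0 V
  have hU_eq : U = C a * X 0 + C b * X 1 + C e := eq_affine_of_totalDegree_le_one hU.le
  have hV_eq : V = C c * X 0 + C d * X 1 + C f := eq_affine_of_totalDegree_le_one hV.le
  have hab : a ≠ 0 ∨ b ≠ 0 := by
    by_contra! h
    simp [hU_eq, h.1, h.2] at hU
  have hcd : c ≠ 0 ∨ d ≠ 0 := by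
    by_contra! h
    simp [hV_eq, h.1, h.2] at hV
  rcases hF.diagonal_or_antidiagonal_of_aeval_affine_eq hG hm hn hm' hab hcd
    (hU_eq ▸ hV_eq ▸ hUV) hmn with ⟨hb, hc, hm'm, hn'n⟩ | ⟨ha, hd, hm'n, hn'm⟩
  · refine ⟨⟨a, e, d, f, mul_ne_zero (hab.resolve_right (not_not.mpr hb))
      (hcd.resolve_left (not_not.mpr hc)), Or.inl ⟨?_, ?_⟩⟩, Or.inl ⟨hm'm, hn'n⟩⟩
    · rw [hU_eq, hb, C_0, zero_mul, add_zero]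
    · rw [hV_eq, hc, C_0, zero_mul, zero_add]
  · refine ⟨⟨c, f, b, e, mul_ne_zero (hcd.resolve_right (not_not.mpr hd))
      (hab.resolve_left (not_not.mpr ha)), Or.inr ⟨?_, ?_⟩⟩, Or.inr ⟨hm'n, hn'm⟩⟩
    · rw [hU_eq, ha, C_0, zero_mul, zero_add]
    · rw [hV_eq, hd, C_0, zero_mul, add_zero]

end IsRectangular

end MvPolynomial

/-- If `F` is rectangular w.r.t. the standard coordinates `(X,Y)` with pair `(m,n)`,
and `(U,V)` is another coordinate system w.r.t. which `F` is rectangular with pair `(m',n')`,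
then `(U,V) = (aX+b, cY+d)` or `(cY+d, aX+b)` with `ac ≠ 0`, and `{m',n'} = {m,n}`. -/
theorem stmt4 (k : Type) [Field k] (F : MvPolynomial (Fin 2) k) (m n : ℕ)
    (hm : 1 ≤ m) (hn : 1 ≤ n)
    (hmem : MvPolynomial.coeff (Finsupp.single 0 m + Finsupp.single 1 n) F ≠ 0)
    (hsupp : ∀ d ∈ F.support, d 0 ≤ m ∧ d 1 ≤ n)
    (U V : MvPolynomial (Fin 2) k)
    (hUV : Function.Bijective ⇑(MvPolynomial.aeval (R := k) ![U, V]))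
    (G : MvPolynomial (Fin 2) k) (hG : MvPolynomial.aeval ![U, V] G = F)
    (m' n' : ℕ) (hm' : 1 ≤ m') (hn' : 1 ≤ n')
    (hmem' : MvPolynomial.coeff (Finsupp.single 0 m' + Finsupp.single 1 n') G ≠ 0)
    (hsupp' : ∀ d ∈ G.support, d 0 ≤ m' ∧ d 1 ≤ n') :
    (∃ a b c d : k, a * c ≠ 0 ∧
       ((U = C a * X 0 + C b ∧ V = C c * X 1 + C d) ∨
        (U = C c * X 1 + C d ∧ V = C a * X 0 + C b)))
    ∧ ((m' = m ∧ n' = n) ∨ (m' = n ∧ n' = m)) := by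
  have hF : F.IsRectangular m n := ⟨hmem, hsupp⟩
  have hG' : G.IsRectangular m' n' := ⟨hmem', hsupp'⟩
  obtain ⟨g, hg, hgUV⟩ := exists_leftInverse_aeval_of_bijective hUV
  obtain ⟨hU, hV, hmn⟩ := hF.totalDegree_eq_one_of_aeval_eq hG' hm hm' hn'
    (totalDegree_pos_of_injective_aeval hUV.injective) (totalDegree_pos_of_injective_aeval hg)
    hG (hG ▸ hgUV G)
  exact hF.exists_affine_of_aeval_eq hG' hm hn hm' hU hV hG hmn
end

section
/- Let k be a field, F = u(Y)·X² + X ∈ A = k[X,Y] where u(Y) ∈ k[Y] with deg u(Y) > 1. Then the set of prime ideals p of A for which k[F] → A/p is an isomorphism is exactly { (Y−b) : u(b) = 0 }, so its cardinality equals the number of distinct roots of u(Y) in k. -/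
set_option maxHeartbeats 1000000
set_option synthInstance.maxHeartbeats 200000


open MvPolynomial
open Classical

/-- The set `Γ_alg(F,A)` of primes `p` of `A = k[X,Y]` such that the composite
`k[F] ↪ A → A/p` is an isomorphism. -/
def GammaAlg (k : Type) [Field k] (F : MvPolynomial (Fin 2) k) :
    Set (Ideal (MvPolynomial (Fin 2) k)) :=
  {p | p.IsPrime ∧ Function.Bijective
    (fun q : Polynomial k => Ideal.Quotient.mk p (Polynomial.aeval F q))}

section Aux

variable {k : Type} [Field k]

/-- Key degree argument: if `u(g) f² + f = X` in `k[X]` with `deg u > 1`, then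
`g = C b` with `u(b) = 0`, and `f = X`. -/
lemma key_deg (u f g : Polynomial k) (hu : 1 < u.natDegree)
    (h : Polynomial.aeval g u * f ^ 2 + f = Polynomial.X) :
    ∃ b : k, Polynomial.eval b u = 0 ∧ g = Polynomial.C b ∧ f = Polynomial.X := by
  have hu0 : u ≠ 0 := fun h0 => by simp [h0] at hu
  have hf0 : f ≠ 0 := by
    rintro rfl
    simp at h
    exact Polynomial.X_ne_zero h.symm
  by_cases hg : g.natDegree = 0
  · -- g is a constant
    obtain ⟨b, rfl⟩ : ∃ b, g = Polynomial.C b :=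
      ⟨g.coeff 0, Polynomial.eq_C_of_natDegree_eq_zero hg⟩
    have haev : Polynomial.aeval (Polynomial.C b) u = Polynomial.C (Polynomial.eval b u) := by
      rw [← Polynomial.comp_eq_aeval, Polynomial.comp_C]
    rw [haev] at h
    by_cases hb : Polynomial.eval b u = 0
    · refine ⟨b, hb, rfl, ?_⟩
      rw [hb] at h; simpa using h
    · exfalso
      by_cases hfd : f.natDegree = 0
      · obtain ⟨a, rfl⟩ : ∃ a, f = Polynomial.C a :=
          ⟨f.coeff 0, Polynomial.eq_C_of_natDegree_eq_zero hfd⟩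
        rw [← Polynomial.C_pow, ← Polynomial.C_mul, ← Polynomial.C_add] at h
        exact Polynomial.X_ne_C _ h.symm
      · have h1 : (Polynomial.C (Polynomial.eval b u) * f ^ 2).natDegree = 2 * f.natDegree := by
          rw [Polynomial.natDegree_C_mul hb, Polynomial.natDegree_pow]
        have h2 : f.natDegree < (Polynomial.C (Polynomial.eval b u) * f ^ 2).natDegree := by
          rw [h1]; omega
        have := Polynomial.natDegree_add_eq_left_of_natDegree_lt h2
        rw [h] at this
        rw [Polynomial.natDegree_X, h1] at this
        omega
  · -- g nonconstant: impossible
    exfalso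
    have hcomp : (Polynomial.aeval g u).natDegree = u.natDegree * g.natDegree := by
      rw [← Polynomial.comp_eq_aeval, Polynomial.natDegree_comp]
    have hc0 : Polynomial.aeval g u ≠ 0 := by
      intro h0
      rw [h0] at hcomp
      simp only [Polynomial.natDegree_zero] at hcomp
      rcases Nat.mul_eq_zero.mp hcomp.symm with h' | h' <;> omega
    have h1 : (Polynomial.aeval g u * f ^ 2).natDegree
        = u.natDegree * g.natDegree + 2 * f.natDegree := by
      rw [Polynomial.natDegree_mul hc0 (pow_ne_zero 2 hf0), hcomp, Polynomial.natDegree_pow]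
    have h2 : f.natDegree < (Polynomial.aeval g u * f ^ 2).natDegree := by
      rw [h1]
      have : 2 ≤ u.natDegree * g.natDegree := by
        calc 2 ≤ u.natDegree := hu
        _ = u.natDegree * 1 := (mul_one _).symm
        _ ≤ u.natDegree * g.natDegree := Nat.mul_le_mul_left _ (by omega)
      omega
    have := Polynomial.natDegree_add_eq_left_of_natDegree_lt h2
    rw [h, Polynomial.natDegree_X, h1] at this
    have : 2 ≤ u.natDegree * g.natDegree := by
      calc 2 ≤ u.natDegree := hu
      _ = u.natDegree * 1 := (mul_one _).symm
      _ ≤ u.natDegree * g.natDegree := Nat.mul_le_mul_left _ (by omega)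
    omega

/-- For any algebra map `ψ : k[X₀,X₁] → k[X]` with `ψ X₀ = X` and `ψ X₁ = C b`,
every `P` is congruent to the "substituted" polynomial modulo `(X₁ - C b)`. -/
lemma sub_aeval_mem (b : k) (ψ : MvPolynomial (Fin 2) k →ₐ[k] Polynomial k)
    (h0 : ψ (X 0) = Polynomial.X) (h1 : ψ (X 1) = Polynomial.C b)
    (P : MvPolynomial (Fin 2) k) :
    P - Polynomial.aeval (X 0 : MvPolynomial (Fin 2) k) (ψ P)
      ∈ Ideal.span {(X 1 : MvPolynomial (Fin 2) k) - C b} := by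
  set s : Polynomial k →ₐ[k] MvPolynomial (Fin 2) k :=
    Polynomial.aeval (X 0 : MvPolynomial (Fin 2) k) with hs
  show P - s (ψ P) ∈ _
  induction P using MvPolynomial.induction_on with
  | C a =>
      have : ψ (C a) = Polynomial.C a := by
        simp [MvPolynomial.algHom_C]
      rw [this]
      have : s (Polynomial.C a) = C a := by simp [hs]
      rw [this, sub_self]
      exact zero_mem _
  | add p q hp hq =>
      have : p + q - s (ψ (p + q)) = (p - s (ψ p)) + (q - s (ψ q)) := by
        rw [map_add, map_add]; ring
      rw [this]
      exact add_mem hp hq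
  | mul_X p i hp =>
      have hXi : X i - s (ψ (X i)) ∈
          Ideal.span {(X 1 : MvPolynomial (Fin 2) k) - C b} := by
        fin_cases i
        · show (X (0 : Fin 2) : MvPolynomial (Fin 2) k) - s (ψ (X 0)) ∈ _
          rw [h0]
          have : s Polynomial.X = X 0 := by simp [hs]
          rw [this, sub_self]; exact zero_mem _
        · show (X (1 : Fin 2) : MvPolynomial (Fin 2) k) - s (ψ (X 1)) ∈ _
          rw [h1]
          have : s (Polynomial.C b) = C b := by simp [hs]
          rw [this]
          exact Ideal.subset_span rfl
      have : p * X i - s (ψ (p * X i))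
          = (p - s (ψ p)) * X i + s (ψ p) * (X i - s (ψ (X i))) := by
        rw [map_mul, map_mul]; ring
      rw [this]
      exact add_mem (Ideal.mul_mem_right _ _ hp) (Ideal.mul_mem_left _ _ hXi)

/-- The evaluation map `X₀ ↦ X`, `X₁ ↦ C b`. -/
noncomputable def psiB (b : k) : MvPolynomial (Fin 2) k →ₐ[k] Polynomial k :=
  MvPolynomial.aeval ![Polynomial.X, Polynomial.C b]

lemma psiB_X0 (b : k) : psiB b (X 0 : MvPolynomial (Fin 2) k) = Polynomial.X := by
  simp [psiB]

lemma psiB_X1 (b : k) : psiB b (X 1 : MvPolynomial (Fin 2) k) = Polynomial.C b := by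
  simp [psiB]

lemma psiB_section (b : k) (q : Polynomial k) :
    psiB b (Polynomial.aeval (X 0 : MvPolynomial (Fin 2) k) q) = q := by
  rw [← Polynomial.aeval_algHom_apply, psiB_X0, Polynomial.aeval_X_left_apply]

lemma ker_psiB (b : k) :
    RingHom.ker (psiB b : MvPolynomial (Fin 2) k →ₐ[k] Polynomial k)
      = Ideal.span {(X 1 : MvPolynomial (Fin 2) k) - C b} := by
  apply le_antisymm
  · intro P hP
    have h0 : psiB b P = 0 := hP
    have := sub_aeval_mem b (psiB b) (psiB_X0 b) (psiB_X1 b) P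
    rwa [h0, map_zero, sub_zero] at this
  · rw [Ideal.span_le]
    rintro x rfl
    simp only [SetLike.mem_coe, RingHom.mem_ker, map_sub, psiB_X1]
    rw [show ((C b : MvPolynomial (Fin 2) k)) = algebraMap k _ b from rfl, AlgHom.commutes]
    simp

end Aux

/-- For `F = u(Y)·X² + X` with `deg u > 1`,
`Γ_alg(F,A) = { (Y-b) : u(b) = 0 }`, so its cardinality is the number of roots of `u`. -/
theorem stmt6 (k : Type) [Field k] (u : Polynomial k) (hu : 1 < u.natDegree)
    (F : MvPolynomial (Fin 2) k)
    (hF : F = Polynomial.aeval (X 1 : MvPolynomial (Fin 2) k) u * (X 0) ^ 2 + X 0) :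
    GammaAlg k F
      = {p | ∃ b : k, Polynomial.eval b u = 0 ∧ p = Ideal.span {X 1 - C b}}
    ∧ (GammaAlg k F).ncard = u.roots.toFinset.card := by
  have hu0 : u ≠ 0 := fun h0 => by simp [h0] at hu
  -- `ψ b F = X` whenever `u(b) = 0`
  have hpsiF : ∀ b : k, Polynomial.eval b u = 0 → psiB b F = Polynomial.X := by
    intro b hb
    rw [hF, map_add, map_mul, map_pow, psiB_X0]
    rw [← Polynomial.aeval_algHom_apply (psiB b) (X 1 : MvPolynomial (Fin 2) k) u, psiB_X1]
    rw [← Polynomial.comp_eq_aeval, Polynomial.comp_C, hb]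
    simp
  have hmain : GammaAlg k F
      = {p | ∃ b : k, Polynomial.eval b u = 0 ∧ p = Ideal.span {X 1 - C b}} := by
    ext p
    constructor
    · rintro ⟨hp, hbij⟩
      set Φ : Polynomial k →ₐ[k] MvPolynomial (Fin 2) k ⧸ p :=
        (Ideal.Quotient.mkₐ k p).comp (Polynomial.aeval F) with hΦ
      have hbij' : Function.Bijective Φ := hbij
      set E : Polynomial k ≃ₐ[k] (MvPolynomial (Fin 2) k ⧸ p) :=
        AlgEquiv.ofBijective Φ hbij' with hE
      set f : Polynomial k := E.symm (Ideal.Quotient.mk p (X 0)) with hf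
      set g : Polynomial k := E.symm (Ideal.Quotient.mk p (X 1)) with hg
      have hEf : E f = Ideal.Quotient.mk p (X 0) := by rw [hf, AlgEquiv.apply_symm_apply]
      have hEg : E g = Ideal.Quotient.mk p (X 1) := by rw [hg, AlgEquiv.apply_symm_apply]
      have hrel : Polynomial.aeval g u * f ^ 2 + f = Polynomial.X := by
        apply E.injective
        have hEX : E Polynomial.X = Ideal.Quotient.mk p F := by
          show Φ Polynomial.X = _
          rw [hΦ]
          simp [Ideal.Quotient.mkₐ_eq_mk]
        rw [hEX, map_add, map_mul, map_pow, hEf]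
        rw [← Polynomial.aeval_algHom_apply E g u, hEg]
        have hmk : Polynomial.aeval (Ideal.Quotient.mk p (X 1)) u
            = Ideal.Quotient.mk p (Polynomial.aeval (X 1 : MvPolynomial (Fin 2) k) u) := by
          rw [show (Ideal.Quotient.mk p (X 1)) = Ideal.Quotient.mkₐ k p (X 1) from rfl,
            Polynomial.aeval_algHom_apply (Ideal.Quotient.mkₐ k p)
              (X 1 : MvPolynomial (Fin 2) k) u, Ideal.Quotient.mkₐ_eq_mk]
        rw [hmk, hF]
        simp
      obtain ⟨b, hb, hgb, hfX⟩ := key_deg u f g hu hrel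
      refine ⟨b, hb, ?_⟩
      -- `ψ' := E.symm ∘ mk p` sends `X₀ ↦ X`, `X₁ ↦ C b`, and kills `p`.
      set ψ' : MvPolynomial (Fin 2) k →ₐ[k] Polynomial k :=
        (E.symm : (MvPolynomial (Fin 2) k ⧸ p) ≃ₐ[k] Polynomial k).toAlgHom.comp
          (Ideal.Quotient.mkₐ k p) with hψ'
      have hψ'0 : ψ' (X 0) = Polynomial.X := by
        show E.symm (Ideal.Quotient.mkₐ k p (X 0)) = Polynomial.X
        rw [Ideal.Quotient.mkₐ_eq_mk, ← hf, hfX]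
      have hψ'1 : ψ' (X 1) = Polynomial.C b := by
        show E.symm (Ideal.Quotient.mkₐ k p (X 1)) = Polynomial.C b
        rw [Ideal.Quotient.mkₐ_eq_mk, ← hg, hgb]
      apply le_antisymm
      · intro P hP
        have h0 : ψ' P = 0 := by
          show E.symm (Ideal.Quotient.mkₐ k p P) = 0
          rw [Ideal.Quotient.mkₐ_eq_mk, Ideal.Quotient.eq_zero_iff_mem.mpr hP, map_zero]
        have := sub_aeval_mem b ψ' hψ'0 hψ'1 P
        rwa [h0, map_zero, sub_zero] at this
      · rw [Ideal.span_le]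
        rintro x rfl
        simp only [SetLike.mem_coe]
        rw [← Ideal.Quotient.eq_zero_iff_mem, map_sub, sub_eq_zero]
        have hECb : E (Polynomial.C b) = Ideal.Quotient.mk p (C b) := by
          show Φ (Polynomial.C b) = _
          rw [hΦ]
          simp only [AlgHom.comp_apply, Polynomial.aeval_C, Ideal.Quotient.mkₐ_eq_mk]
          rfl
        rw [← hECb, ← hgb, hEg]
    · rintro ⟨b, hb, rfl⟩
      have hker := ker_psiB b
      constructor
      · rw [← hker]
        exact RingHom.ker_isPrime _
      · -- build the two-sided inverse via the lift of `ψ b`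
        set p : Ideal (MvPolynomial (Fin 2) k) := Ideal.span {X 1 - C b} with hp
        have hmem : ∀ P, P ∈ p ↔ psiB b P = 0 := by
          intro P
          rw [← hker]
          rfl
        set ψ' : MvPolynomial (Fin 2) k ⧸ p →+* Polynomial k :=
          Ideal.Quotient.lift p (psiB b : MvPolynomial (Fin 2) k →+* Polynomial k)
            (fun a ha => (hmem a).mp ha) with hψ'
        have hψ'mk : ∀ P, ψ' (Ideal.Quotient.mk p P) = psiB b P := fun P =>
          Ideal.Quotient.lift_mk _ _ _
        have hleft : ∀ q : Polynomial k,
            ψ' (Ideal.Quotient.mk p (Polynomial.aeval F q)) = q := by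
          intro q
          rw [hψ'mk]
          rw [← Polynomial.aeval_algHom_apply (psiB b) F q, hpsiF b hb,
            Polynomial.aeval_X_left_apply]
        rw [Function.bijective_iff_has_inverse]
        refine ⟨ψ', hleft, ?_⟩
        intro a
        obtain ⟨P, rfl⟩ := Ideal.Quotient.mk_surjective a
        rw [hψ'mk, ← sub_eq_zero, ← map_sub, Ideal.Quotient.eq_zero_iff_mem]
        apply (hmem _).mpr
        rw [map_sub, ← Polynomial.aeval_algHom_apply (psiB b) F (psiB b P), hpsiF b hb,
          Polynomial.aeval_X_left_apply, sub_self]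
  refine ⟨hmain, ?_⟩
  have himg : GammaAlg k F
      = (fun b : k => Ideal.span {(X 1 : MvPolynomial (Fin 2) k) - C b}) ''
        {b : k | Polynomial.eval b u = 0} := by
    rw [hmain]
    ext p
    simp only [Set.mem_setOf_eq, Set.mem_image]
    constructor
    · rintro ⟨b, hb, rfl⟩; exact ⟨b, hb, rfl⟩
    · rintro ⟨b, hb, rfl⟩; exact ⟨b, hb, rfl⟩
  have hinj : Function.Injective
      (fun b : k => Ideal.span {(X 1 : MvPolynomial (Fin 2) k) - C b}) := by
    intro b b' h
    have h' : Ideal.span {(X 1 : MvPolynomial (Fin 2) k) - C b}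
        = Ideal.span {(X 1 : MvPolynomial (Fin 2) k) - C b'} := h
    have h1 : (X 1 : MvPolynomial (Fin 2) k) - C b
        ∈ Ideal.span {(X 1 : MvPolynomial (Fin 2) k) - C b'} := by
      rw [← h']; exact Ideal.subset_span rfl
    rw [← ker_psiB b'] at h1
    have : psiB b' ((X 1 : MvPolynomial (Fin 2) k) - C b) = 0 := h1
    rw [map_sub, psiB_X1] at this
    have hCb : psiB b' (C b : MvPolynomial (Fin 2) k) = Polynomial.C b := by
      rw [show ((C b : MvPolynomial (Fin 2) k)) = algebraMap k _ b from rfl, AlgHom.commutes]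
      rfl
    rw [hCb, sub_eq_zero] at this
    exact (Polynomial.C_injective this).symm
  rw [himg, Set.ncard_image_of_injective _ hinj]
  have hset : {b : k | Polynomial.eval b u = 0} = ↑u.roots.toFinset := by
    ext b
    simp [Polynomial.mem_roots, hu0, Polynomial.IsRoot]
  rw [hset, Set.ncard_coe_finset]
end

section
/- Let K/k be a field extension, A = k[X,Y], Ā = K[X,Y] = K ⊗_k A, and F ∈ A \ k. If p is a prime ideal of A such that k[F] → A/p is an isomorphism, then pĀ is a prime ideal of Ā such that K[F] → Ā/pĀ is an isomorphism. Moreover the map p ↦ pĀ from Γ_alg(F,A) to Γ_alg(F,Ā) is injective. -/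
open MvPolynomial

/-!
A prime `p` lies in `Γ_alg(F, A)` exactly when it is the kernel of a `k`-algebra map
`χ : A → k[T]` with `χ F = T`. Then `aeval F` is a section of `χ`, so `ker χ` is generated by the
elements `X i - (χ (X i))(F)`. Extending the scalars of `χ` to `K` gives `Φ : Ā → K[T]` with
`Φ F = T`, whose kernel is generated by the same elements; hence `pĀ = ker Φ ∈ Γ_alg(F, Ā)`.
Moreover `pĀ ∩ A = ker χ = p` because `k[T] → K[T]` is injective, which gives injectivity.
-/

section Retraction

variable {R A : Type*} [CommRing R] [CommRing A] [Algebra R A]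

theorem leftInverse_aeval_of_eq_X (Φ : A →ₐ[R] Polynomial R) {G : A}
    (hG : Φ G = Polynomial.X) :
    Function.LeftInverse Φ (Polynomial.aeval G) := fun q => by
  rw [← Polynomial.aeval_algHom_apply, hG, Polynomial.aeval_X_left_apply]

theorem exists_algHom_eq_X_and_ker_eq_of_bijective {F : A} {p : Ideal A}
    (h : Function.Bijective fun q : Polynomial R => Ideal.Quotient.mk p (Polynomial.aeval F q)) :
    ∃ χ : A →ₐ[R] Polynomial R, χ F = Polynomial.X ∧ RingHom.ker χ = p := by
  let φ := AlgEquiv.ofBijective ((Ideal.Quotient.mkₐ R p).comp (Polynomial.aeval F)) h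
  refine ⟨(φ.symm : A ⧸ p →ₐ[R] Polynomial R).comp (Ideal.Quotient.mkₐ R p), ?_, ?_⟩
  · exact φ.symm_apply_eq.2 (congrArg _ (Polynomial.aeval_X F)).symm
  · ext a
    simp [RingHom.mem_ker, Ideal.Quotient.eq_zero_iff_mem]

theorem bijective_quotient_ker_aeval {F : A} (χ : A →ₐ[R] Polynomial R)
    (hχ : χ F = Polynomial.X) :
    Function.Bijective fun q : Polynomial R =>
      Ideal.Quotient.mk (RingHom.ker χ) (Polynomial.aeval F q) := by
  have hχaeval := leftInverse_aeval_of_eq_X χ hχ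
  refine ⟨fun q₁ q₂ h => ?_, fun y => ?_⟩
  · rwa [Ideal.Quotient.eq, RingHom.mem_ker, map_sub, hχaeval, hχaeval, sub_eq_zero] at h
  · obtain ⟨a, rfl⟩ := Ideal.Quotient.mk_surjective y
    exact ⟨χ a, Ideal.Quotient.eq.2 (by rw [RingHom.mem_ker, map_sub, hχaeval, sub_self])⟩

end Retraction

theorem mem_gammaAlg_iff {k : Type} [Field k] {F : MvPolynomial (Fin 2) k}
    {p : Ideal (MvPolynomial (Fin 2) k)} :
    p ∈ GammaAlg k F ↔ ∃ χ : MvPolynomial (Fin 2) k →ₐ[k] Polynomial k,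
      χ F = Polynomial.X ∧ RingHom.ker χ = p := by
  constructor
  · rintro ⟨-, h⟩
    exact exists_algHom_eq_X_and_ker_eq_of_bijective h
  · rintro ⟨χ, hχ, rfl⟩
    exact ⟨RingHom.ker_isPrime χ, bijective_quotient_ker_aeval χ hχ⟩

namespace MvPolynomial

theorem ker_eq_span_X_sub_of_leftInverse {R B σ : Type*} [CommRing R] [CommRing B]
    [Algebra R B] (Φ : MvPolynomial σ R →ₐ[R] B) (s : B →ₐ[R] MvPolynomial σ R)
    (hs : Function.LeftInverse Φ s) :
    RingHom.ker Φ = Ideal.span (Set.range fun i => X i - s (Φ (X i))) := by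
  set J := Ideal.span (Set.range fun i => X i - s (Φ (X i)))
  refine le_antisymm (fun g hg => ?_) (Ideal.span_le.2 ?_)
  · have hJ : (Ideal.Quotient.mkₐ R J).comp (s.comp Φ) = Ideal.Quotient.mkₐ R J :=
      MvPolynomial.algHom_ext fun i => Ideal.Quotient.eq.2 <| by
        rw [← neg_mem_iff, neg_sub]; exact Ideal.subset_span ⟨i, rfl⟩
    rw [← Ideal.Quotient.eq_zero_iff_mem, ← Ideal.Quotient.mkₐ_eq_mk R, ← hJ]
    simp [(RingHom.mem_ker).1 hg]
  · rintro _ ⟨i, rfl⟩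
    simp [RingHom.mem_ker, hs _]

variable {R S σ : Type*} [CommRing R] [CommRing S] (f : R →+* S)
  (χ : MvPolynomial σ R →ₐ[R] Polynomial R)

noncomputable def extendScalarsToPolynomial : MvPolynomial σ S →ₐ[S] Polynomial S :=
  aeval fun i => (χ (X i)).map f

theorem extendScalarsToPolynomial_map (a : MvPolynomial σ R) :
    extendScalarsToPolynomial f χ (map f a) = (χ a).map f := by
  have h : (extendScalarsToPolynomial f χ).toRingHom.comp (map f)
      = (Polynomial.mapRingHom f).comp χ.toRingHom :=
    ringHom_ext (fun r => by simp [extendScalarsToPolynomial])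
      (fun i => by simp [extendScalarsToPolynomial])
  exact RingHom.congr_fun h a

theorem map_aeval_polynomial (F : MvPolynomial σ R) (q : Polynomial R) :
    map f (Polynomial.aeval F q) = Polynomial.aeval (map f F) (q.map f) := by
  simp only [Polynomial.aeval_def, Polynomial.hom_eval₂, Polynomial.eval₂_map, algebraMap_eq,
    map_comp_C]

variable {χ}

theorem extendScalarsToPolynomial_map_eq_X {F : MvPolynomial σ R} (hF : χ F = Polynomial.X) :
    extendScalarsToPolynomial f χ (map f F) = Polynomial.X := by
  rw [extendScalarsToPolynomial_map, hF, Polynomial.map_X]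

theorem map_ker_eq_ker_extendScalarsToPolynomial {F : MvPolynomial σ R}
    (hF : χ F = Polynomial.X) :
    Ideal.map (map f) (RingHom.ker χ) = RingHom.ker (extendScalarsToPolynomial f χ) := by
  rw [ker_eq_span_X_sub_of_leftInverse _ _ (leftInverse_aeval_of_eq_X _ hF),
    ker_eq_span_X_sub_of_leftInverse _ _
      (leftInverse_aeval_of_eq_X _ (extendScalarsToPolynomial_map_eq_X f hF)),
    Ideal.map_span, ← Set.range_comp]
  congr 2 with i
  rw [Function.comp_apply, map_sub, map_X, map_aeval_polynomial, ← extendScalarsToPolynomial_map,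
    map_X]

theorem comap_ker_extendScalarsToPolynomial (hf : Function.Injective f) :
    Ideal.comap (map f) (RingHom.ker (extendScalarsToPolynomial f χ)) = RingHom.ker χ := by
  ext a
  rw [Ideal.mem_comap, RingHom.mem_ker, RingHom.mem_ker, extendScalarsToPolynomial_map,
    Polynomial.map_eq_zero_iff hf]

end MvPolynomial

theorem stmt8_general (k K : Type) [Field k] [Field K] [Algebra k K]
    (F : MvPolynomial (Fin 2) k) :
    (∀ p ∈ GammaAlg k F,
        Ideal.map (MvPolynomial.map (algebraMap k K)) p
          ∈ GammaAlg K (MvPolynomial.map (algebraMap k K) F))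
    ∧ ∀ p ∈ GammaAlg k F, ∀ q ∈ GammaAlg k F,
        Ideal.map (MvPolynomial.map (algebraMap k K)) p
          = Ideal.map (MvPolynomial.map (algebraMap k K)) q → p = q := by
  set f := algebraMap k K
  have comap_map : ∀ p ∈ GammaAlg k F, (p.map (map f)).comap (map f) = p := by
    intro p hp
    obtain ⟨χ, hχ, rfl⟩ := mem_gammaAlg_iff.1 hp
    rw [map_ker_eq_ker_extendScalarsToPolynomial f hχ,
      comap_ker_extendScalarsToPolynomial f f.injective]
  refine ⟨fun p hp => ?_, fun p hp q hq hpq => by rw [← comap_map p hp, hpq, comap_map q hq]⟩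
  obtain ⟨χ, hχ, rfl⟩ := mem_gammaAlg_iff.1 hp
  rw [map_ker_eq_ker_extendScalarsToPolynomial f hχ]
  exact mem_gammaAlg_iff.2 ⟨_, extendScalarsToPolynomial_map_eq_X f hχ, rfl⟩

/-- For a field extension `K/k`, `A = k[X,Y]`, `Ā = K[X,Y]` and `F ∈ A \ k`:
if `p ∈ Γ_alg(F,A)` then `pĀ ∈ Γ_alg(F,Ā)`, and `p ↦ pĀ` is injective on `Γ_alg(F,A)`. -/
theorem stmt8 (k K : Type) [Field k] [Field K] [Algebra k K]
    (F : MvPolynomial (Fin 2) k) (hF : ∀ c : k, F ≠ C c) :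
    (∀ p ∈ GammaAlg k F,
        Ideal.map (MvPolynomial.map (algebraMap k K)) p
          ∈ GammaAlg K (MvPolynomial.map (algebraMap k K) F))
    ∧ ∀ p ∈ GammaAlg k F, ∀ q ∈ GammaAlg k F,
        Ideal.map (MvPolynomial.map (algebraMap k K)) p
          = Ideal.map (MvPolynomial.map (algebraMap k K)) q → p = q :=
  stmt8_general k K F
end

section
/- Let k be a field, A = k[X,Y], F ∈ A \ k with k(F) ⊊ Frac(A), and let 𝒜 = S⁻¹A where S = k[F] \ {0}. Then 𝒜 is a principal ideal domain of Krull dimension 1. -/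
open MvPolynomial

/-!
Primes of `𝒜` correspond to primes `p` of `k[X,Y]` disjoint from `S`. Such a `p` is never
maximal: `k[X,Y] ⧸ p` would be finite over `k` (Zariski's lemma), so the image of the
transcendental element `F` would satisfy a monic polynomial, putting an element of `S` into `p`.
Since `dim k[X,Y] = 2`, `p` has height at most one and is therefore principal, `k[X,Y]` being a
UFD; hence every prime of `𝒜` is principal. Finally `𝒜` is not a field: the kernel of the
Kronecker substitution `X ↦ T, Y ↦ T ^ N` with `N > deg F` is a nonzero prime disjoint from `S`,
because the substitution sends `F` to a nonconstant, hence transcendental, polynomial.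
-/

/-- The multiplicative set `S = k[F] \ {0}` in `A = k[X,Y]`. -/
def kFnonzero (k : Type) [Field k] (F : MvPolynomial (Fin 2) k) :
    Submonoid (MvPolynomial (Fin 2) k) where
  carrier := {a | a ∈ Algebra.adjoin k ({F} : Set (MvPolynomial (Fin 2) k)) ∧ a ≠ 0}
  mul_mem' := fun ha hb => ⟨mul_mem ha.1 hb.1, mul_ne_zero ha.2 hb.2⟩
  one_mem' := ⟨one_mem _, one_ne_zero⟩

theorem Nat.eq_and_eq_of_add_mul_eq {N a b a' b' : ℕ} (ha : a < N) (ha' : a' < N)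
    (h : a + N * b = a' + N * b') : a = a' ∧ b = b' := by
  have hN : 0 < N := by omega
  constructor
  · simpa [Nat.add_mul_mod_self_left, Nat.mod_eq_of_lt ha, Nat.mod_eq_of_lt ha'] using
      congrArg (· % N) h
  · simpa [Nat.add_mul_div_left _ _ hN, Nat.div_eq_of_lt ha, Nat.div_eq_of_lt ha'] using
      congrArg (· / N) h

noncomputable def kroneckerSubst (R : Type*) [CommRing R] (N : ℕ) :
    MvPolynomial (Fin 2) R →ₐ[R] Polynomial R :=
  aeval ![Polynomial.X, Polynomial.X ^ N]

section Kronecker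

variable {R : Type*} [CommRing R]

theorem kroneckerSubst_monomial (N : ℕ) (d : Fin 2 →₀ ℕ) (a : R) :
    kroneckerSubst R N (monomial d a) = Polynomial.C a * Polynomial.X ^ (d 0 + N * d 1) := by
  simp [kroneckerSubst, aeval_monomial, Finsupp.prod_fintype, Fin.prod_univ_two, pow_add,
    pow_mul, Polynomial.algebraMap_eq]

theorem coeff_kroneckerSubst {N : ℕ} {P : MvPolynomial (Fin 2) R}
    (hP : ∀ d ∈ P.support, d 0 < N) {d : Fin 2 →₀ ℕ} (hd : d 0 < N) :
    (kroneckerSubst R N P).coeff (d 0 + N * d 1) = P.coeff d := by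
  have hexp : ∀ e ∈ P.support, (d 0 + N * d 1 = e 0 + N * e 1 ↔ d = e) := by
    intro e he
    refine ⟨fun h => ?_, fun h => h ▸ rfl⟩
    obtain ⟨h0, h1⟩ := Nat.eq_and_eq_of_add_mul_eq hd (hP e he) h
    ext i
    fin_cases i <;> assumption
  conv_lhs => rw [P.as_sum, map_sum]
  simp only [kroneckerSubst_monomial, Polynomial.finsetSum_coeff, Polynomial.coeff_C_mul,
    Polynomial.coeff_X_pow]
  rw [Finset.sum_congr rfl fun e he => by rw [if_congr (hexp e he) rfl rfl]]
  simp only [mul_ite, mul_one, mul_zero, Finset.sum_ite_eq, ite_eq_left_iff]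
  exact fun h => (notMem_support_iff.mp h).symm

theorem eq_zero_of_kroneckerSubst_eq_zero {N : ℕ} {P : MvPolynomial (Fin 2) R}
    (hN : P.totalDegree < N) (hP : kroneckerSubst R N P = 0) : P = 0 := by
  have hlt : ∀ d ∈ P.support, d 0 < N := fun d hd =>
    lt_of_le_of_lt ((Finsupp.le_degree 0 d).trans (le_totalDegree hd)) hN
  ext d
  by_cases hd : d ∈ P.support
  · rw [← coeff_kroneckerSubst hlt (hlt d hd), hP]
    simp
  · simpa using hd

theorem natDegree_kroneckerSubst_ne_zero {F : MvPolynomial (Fin 2) R} (hF : ∀ c : R, F ≠ C c)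
    {N : ℕ} (hN : F.totalDegree < N) : (kroneckerSubst R N F).natDegree ≠ 0 := by
  intro h
  obtain ⟨c, hc⟩ := Polynomial.natDegree_eq_zero.mp h
  refine hF c (sub_eq_zero.mp (eq_zero_of_kroneckerSubst_eq_zero (N := N) ?_ ?_))
  · exact (totalDegree_sub_C_le F c).trans_lt hN
  · rw [map_sub, ← hc, kroneckerSubst, aeval_C, Polynomial.algebraMap_eq, sub_self]

end Kronecker

section Transcendence

variable {R : Type*} [CommRing R] [IsDomain R] {F : MvPolynomial (Fin 2) R}

theorem transcendental_kroneckerSubst (hF : ∀ c : R, F ≠ C c) {N : ℕ}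
    (hN : F.totalDegree < N) : Transcendental R (kroneckerSubst R N F) := by
  have hdeg := natDegree_kroneckerSubst_ne_zero hF hN
  refine Polynomial.transcendental _ hdeg (mem_nonZeroDivisors_of_ne_zero ?_)
  exact Polynomial.leadingCoeff_ne_zero.mpr fun h0 => hdeg (by rw [h0, Polynomial.natDegree_zero])

theorem transcendental_of_forall_ne_C (hF : ∀ c : R, F ≠ C c) : Transcendental R F :=
  fun h => transcendental_kroneckerSubst hF F.totalDegree.lt_succ_self (h.algHom _)

end Transcendence

theorem Ideal.IsMaximal.exists_monic_aeval_mem {k A : Type*} [Field k] [CommRing A]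
    [Algebra k A] [Algebra.FiniteType k A] {m : Ideal A} (hm : m.IsMaximal) (a : A) :
    ∃ q : Polynomial k, q.Monic ∧ Polynomial.aeval a q ∈ m := by
  let _ := Ideal.Quotient.field m
  have : Module.Finite k (A ⧸ m) := finite_of_finite_type_of_isJacobsonRing k (A ⧸ m)
  obtain ⟨q, hq, hqa⟩ := Algebra.IsIntegral.isIntegral (R := k) (Ideal.Quotient.mkₐ k m a)
  refine ⟨q, hq, Ideal.Quotient.eq_zero_iff_mem.mp ?_⟩
  rw [← Ideal.Quotient.mkₐ_eq_mk k, ← Polynomial.aeval_algHom_apply, Polynomial.aeval_def]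
  exact hqa

theorem Ideal.IsPrime.isPrincipal_of_height_le_one {R : Type*} [CommRing R] [IsDomain R]
    [UniqueFactorizationMonoid R] {p : Ideal R} (hp : p.IsPrime) (h : p.height ≤ 1) :
    p.IsPrincipal := by
  rcases eq_or_ne p ⊥ with rfl | hbot
  · exact bot_isPrincipal
  obtain ⟨f, hfp, hf⟩ := hp.exists_mem_prime_of_ne_bot hbot
  have hspan : (Ideal.span {f}).IsPrime := (Ideal.span_singleton_prime hf.ne_zero).mpr hf
  suffices Ideal.span {f} = p from this ▸ ⟨f, rfl⟩
  by_contra hne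
  have hlt : Ideal.span {f} < p :=
    lt_of_le_of_ne ((Ideal.span_singleton_le_iff_mem p).mpr hfp) hne
  have hlt1 : (Ideal.span {f}).height < 1 := Ideal.height_le_iff.mp h _ hspan hlt
  rw [Order.lt_one_iff, Ideal.height_eq_zero_iff_eq_bot, Ideal.span_singleton_eq_bot] at hlt1
  exact hf.ne_zero hlt1

theorem IsLocalization.isPrincipalIdealRing_of_isPrincipal {R S : Type*} [CommRing R]
    [CommRing S] [Algebra R S] (M : Submonoid R) [IsLocalization M S]
    (h : ∀ p : Ideal R, p.IsPrime → Disjoint (M : Set R) p → p.IsPrincipal) :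
    IsPrincipalIdealRing S := by
  refine IsPrincipalIdealRing.of_prime fun P hP => ?_
  obtain ⟨hp, hd⟩ := (IsLocalization.isPrime_iff_isPrime_disjoint M S P).mp hP
  obtain ⟨f, hf⟩ := h _ hp hd
  rw [← IsLocalization.map_under M S P, hf, Ideal.submodule_span_eq, Ideal.map_span,
    Set.image_singleton]
  exact ⟨⟨_, rfl⟩⟩

theorem IsLocalization.not_isField_of_isPrime_disjoint {R S : Type*} [CommRing R] [Nontrivial R]
    [CommRing S] [Algebra R S] (M : Submonoid R) (hM : M ≤ nonZeroDivisors R)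
    [IsLocalization M S] {p : Ideal R} (hp : p.IsPrime) (hbot : p ≠ ⊥)
    (hd : Disjoint (M : Set R) p) : ¬ IsField S := by
  have hinj := IsLocalization.injective S hM
  have : Nontrivial S := hinj.nontrivial
  refine Ring.not_isField_iff_exists_prime.mpr
    ⟨p.map (algebraMap R S), fun h => hbot ?_, isPrime_of_isPrime_disjoint M S p hp hd⟩
  rw [← IsLocalization.under_map_of_isPrime_disjoint M S hp hd, h, Ideal.under,
    Ideal.comap_bot_of_injective _ hinj]

section kFnonzero

variable {k : Type} [Field k] {F : MvPolynomial (Fin 2) k}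

theorem aeval_mem_kFnonzero (hF : Transcendental k F) {q : Polynomial k} (hq : q ≠ 0) :
    Polynomial.aeval F q ∈ kFnonzero k F :=
  ⟨Polynomial.aeval_mem_adjoin_singleton k F, fun h => hq (transcendental_iff.mp hF q h)⟩

theorem disjoint_kFnonzero_ker {B : Type*} [CommRing B] [Algebra k B]
    (φ : MvPolynomial (Fin 2) k →ₐ[k] B) (hφ : Transcendental k (φ F)) :
    Disjoint (kFnonzero k F : Set (MvPolynomial (Fin 2) k)) (RingHom.ker φ) := by
  refine Set.disjoint_left.mpr fun s ⟨hs, hs0⟩ hker => hs0 ?_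
  rw [Algebra.adjoin_singleton_eq_range_aeval] at hs
  obtain ⟨q, rfl⟩ := hs
  have hq : q = 0 := transcendental_iff.mp hφ q (by
    rw [Polynomial.aeval_algHom_apply]; exact hker)
  simp [hq]

theorem height_le_one_of_disjoint_kFnonzero (hF : Transcendental k F)
    {p : Ideal (MvPolynomial (Fin 2) k)} (hp : p.IsPrime)
    (hd : Disjoint (kFnonzero k F : Set (MvPolynomial (Fin 2) k)) p) : p.height ≤ 1 := by
  have hdim : ringKrullDim (MvPolynomial (Fin 2) k) = 2 := by simp
  have : FiniteRingKrullDim (MvPolynomial (Fin 2) k) :=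
    finiteRingKrullDim_iff_ne_bot_and_top.mpr (by rw [hdim]; decide)
  by_contra! hlt
  have hmax : p.IsMaximal := by
    refine Ideal.isMaximal_of_height_eq_ringKrullDim (le_antisymm
      Ideal.height_le_ringKrullDim_of_isPrime ?_)
    rw [hdim]
    exact WithBot.coe_le_coe.mpr (Order.add_one_le_of_lt hlt)
  obtain ⟨q, hq, hqp⟩ := hmax.exists_monic_aeval_mem (k := k) F
  exact Set.disjoint_left.mp hd (aeval_mem_kFnonzero hF hq.ne_zero) hqp

theorem ker_kroneckerSubst_ne_bot {N : ℕ} (hN : N ≠ 0) :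
    RingHom.ker (kroneckerSubst k N) ≠ ⊥ := by
  refine (Submodule.ne_bot_iff _).mpr ⟨X 1 - X 0 ^ N, by simp [kroneckerSubst], fun h => ?_⟩
  simpa [hN] using congrArg (eval ![0, 1]) h

end kFnonzero

theorem stmt12_general (k : Type) [Field k]
    (F : MvPolynomial (Fin 2) k) (hF : ∀ c : k, F ≠ C c)
    (𝒜 : Type) [CommRing 𝒜] [Algebra (MvPolynomial (Fin 2) k) 𝒜]
    [IsLocalization (kFnonzero k F) 𝒜] :
    IsDomain 𝒜 ∧ IsPrincipalIdealRing 𝒜 ∧ ringKrullDim 𝒜 = 1 := by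
  have hS : kFnonzero k F ≤ nonZeroDivisors (MvPolynomial (Fin 2) k) :=
    fun s hs => mem_nonZeroDivisors_of_ne_zero hs.2
  have : IsDomain 𝒜 := IsLocalization.isDomain_of_le_nonZeroDivisors _ hS
  have : IsPrincipalIdealRing 𝒜 :=
    IsLocalization.isPrincipalIdealRing_of_isPrincipal (kFnonzero k F) fun p hp hd =>
      hp.isPrincipal_of_height_le_one
        (height_le_one_of_disjoint_kFnonzero (transcendental_of_forall_ne_C hF) hp hd)
  have hnf : ¬ IsField 𝒜 :=
    IsLocalization.not_isField_of_isPrime_disjoint _ hS (RingHom.ker_isPrime _)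
      (ker_kroneckerSubst_ne_bot F.totalDegree.succ_ne_zero)
      (disjoint_kFnonzero_ker _ (transcendental_kroneckerSubst hF F.totalDegree.lt_succ_self))
  exact ⟨‹_›, ‹_›, IsPrincipalIdealRing.ringKrullDim_eq_one 𝒜 hnf⟩

/-- For `F ∈ A \ k` with `k(F) ⊊ Frac A`, the localization
`𝒜 = (k[F] \ {0})⁻¹ A` is a principal ideal domain of Krull dimension `1`. -/
theorem stmt12 (k : Type) [Field k] (L : Type) [Field L]
    [Algebra (MvPolynomial (Fin 2) k) L] [IsFractionRing (MvPolynomial (Fin 2) k) L]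
    [Algebra k L] [IsScalarTower k (MvPolynomial (Fin 2) k) L]
    (F : MvPolynomial (Fin 2) k) (hF : ∀ c : k, F ≠ C c)
    (hprop : IntermediateField.adjoin k
        ({algebraMap (MvPolynomial (Fin 2) k) L F} : Set L) ≠ ⊤)
    (𝒜 : Type) [CommRing 𝒜] [Algebra (MvPolynomial (Fin 2) k) 𝒜]
    [IsLocalization (kFnonzero k F) 𝒜] :
    IsDomain 𝒜 ∧ IsPrincipalIdealRing 𝒜 ∧ ringKrullDim 𝒜 = 1 :=
  stmt12_general k F hF 𝒜
end
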